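/- arXiv:2003.10660 — 10 statements merged into one kernel-verified Lean document; each statement's English description precedes it below -/
import Mathlib

section
/- Let {T_n} be the tribonacci numbers and {F_n} the Fibonacci numbers. For every integer n ≥ 2, the Toeplitz–Hessenberg determinant det(1; T_0, T_1, …, T_{n−1}) equals (−1)^{n−1} F_{n−2}. -/
/-- The determinant of the `n × n` Toeplitz–Hessenberg matrix whose `(i,j)` entry
(0-indexed) is `a (i - j + 1)` when `j ≤ i + 1` (so `a 0` lies on the superdiagonal
and `a k` on the `k`-th subdiagonal) and `0` otherwise. -/
def THdet (a : ℕ → ℤ) (n : ℕ) : ℤ :=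
  (Matrix.of fun i j : Fin n => if (j : ℕ) ≤ (i : ℕ) + 1 then a ((i : ℕ) + 1 - (j : ℕ)) else 0).det

/-- The tribonacci numbers: `T 0 = T 1 = 0`, `T 2 = 1`,
`T n = T (n-1) + T (n-2) + T (n-3)` for `n ≥ 3`. -/
def trib : ℕ → ℤ
  | 0 => 0
  | 1 => 0
  | 2 => 1
  | n + 3 => trib (n + 2) + trib (n + 1) + trib n

/-!
Write `D n` for the determinant and `G s n` for the same determinant with its first column
replaced by the shifted tribonacci column `(T_s, T_{s+1}, …)`, so that `D = G 0`. The first row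
has only two nonzero entries, so expanding along it gives
`G s (n+2) = T_s G 0 (n+1) - G (s+1) (n+1)`; and since the determinant is linear in the first
column, `G` satisfies the tribonacci recurrence in `s`. With `T_0 = T_1 = 0`, `T_2 = 1` this yields
`D (n+4) = D (n+2) - D (n+3)`, the signed Fibonacci recurrence, and the formula follows from
`D 2 = 0`, `D 3 = 1`.
-/

section HessenbergCol

variable {R : Type*} [CommRing R]

/-- The Toeplitz–Hessenberg matrix of `a` with its first column replaced by `b`;
the matrix of `THdet a n` is the case `b i = a (i + 1)`. -/
def hessenbergCol (b a : ℕ → R) (n : ℕ) : Matrix (Fin n) (Fin n) R :=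
  Matrix.of fun i j =>
    if (j : ℕ) = 0 then b i
    else if (j : ℕ) ≤ (i : ℕ) + 1 then a ((i : ℕ) + 1 - (j : ℕ)) else 0

theorem hessenbergCol_eq_updateCol (b c a : ℕ → R) (n : ℕ) :
    hessenbergCol b a (n + 1) = (hessenbergCol c a (n + 1)).updateCol 0 fun i => b i := by
  ext i j
  rw [Matrix.updateCol_apply]
  by_cases h : j = 0
  · simp [h, hessenbergCol]
  · have h' : (j : ℕ) ≠ 0 := fun hj => h (Fin.ext hj)
    simp only [hessenbergCol, Matrix.of_apply, if_neg h, if_neg h']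

theorem det_hessenbergCol_add (u v a : ℕ → R) (n : ℕ) :
    (hessenbergCol (u + v) a (n + 1)).det =
      (hessenbergCol u a (n + 1)).det + (hessenbergCol v a (n + 1)).det := by
  rw [hessenbergCol_eq_updateCol _ u, hessenbergCol_eq_updateCol v u]
  exact Matrix.det_updateCol_add _ 0 (fun i : Fin (n + 1) => u i) (fun i => v i) |>.trans <| by
    rw [← hessenbergCol_eq_updateCol]

theorem hessenbergCol_submatrix_succ_zero (b a : ℕ → R) (n : ℕ) :
    (hessenbergCol b a (n + 2)).submatrix Fin.succ (Fin.succAbove 0) =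
      hessenbergCol (fun i => a (i + 1)) a (n + 1) := by
  ext i j
  simp only [Matrix.submatrix_apply, Fin.zero_succAbove, hessenbergCol, Matrix.of_apply,
    Fin.val_succ, Nat.add_eq_zero_iff, one_ne_zero, and_false, if_false]
  split_ifs <;> first | rfl | omega | (congr 1; omega)

theorem hessenbergCol_submatrix_succ_one (b a : ℕ → R) (n : ℕ) :
    (hessenbergCol b a (n + 2)).submatrix Fin.succ (Fin.succAbove 1) =
      hessenbergCol (fun i => b (i + 1)) a (n + 1) := by
  ext i j
  rcases Fin.eq_zero_or_eq_succ j with rfl | ⟨k, rfl⟩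
  · simp [hessenbergCol]
  · rw [Matrix.submatrix_apply, Fin.succAbove_of_le_castSucc _ _ (by simp [Fin.le_def])]
    simp only [hessenbergCol, Matrix.of_apply, Fin.val_succ]
    split_ifs <;> first | rfl | omega | (congr 1; omega)

/-- The first row of the matrix is `(b 0, a 0, 0, …, 0)`. -/
theorem det_hessenbergCol_add_two (b a : ℕ → R) (n : ℕ) :
    (hessenbergCol b a (n + 2)).det =
      b 0 * (hessenbergCol (fun i => a (i + 1)) a (n + 1)).det -
        a 0 * (hessenbergCol (fun i => b (i + 1)) a (n + 1)).det := by
  rw [Matrix.det_succ_row_zero, Fin.sum_univ_succ, Fin.sum_univ_succ,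
    Finset.sum_eq_zero fun j _ => by simp [hessenbergCol]]
  rw [show (Fin.succ 0 : Fin (n + 2)) = 1 from rfl, hessenbergCol_submatrix_succ_zero,
    hessenbergCol_submatrix_succ_one]
  simp [hessenbergCol]
  ring

end HessenbergCol

theorem THdet_eq_det_hessenbergCol (a : ℕ → ℤ) (n : ℕ) :
    THdet a n = (hessenbergCol (fun i => a (i + 1)) a n).det := by
  unfold THdet hessenbergCol
  congr 1
  ext i j
  by_cases h : (j : ℕ) = 0 <;> simp [h]

namespace Trib

def seq (k : ℕ) : ℤ := if k = 0 then 1 else trib (k - 1)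

def shiftDet (s n : ℕ) : ℤ := (hessenbergCol (fun i => trib (i + s)) seq n).det

theorem THdet_seq (n : ℕ) : THdet seq n = shiftDet 0 n :=
  THdet_eq_det_hessenbergCol seq n

theorem shiftDet_add_two (s n : ℕ) :
    shiftDet s (n + 2) = trib s * shiftDet 0 (n + 1) - shiftDet (s + 1) (n + 1) := by
  rw [shiftDet, det_hessenbergCol_add_two]
  simp only [seq, Nat.add_eq_zero_iff, one_ne_zero, and_false, if_false, Nat.add_sub_cancel,
    if_true, one_mul, zero_add, add_zero, shiftDet, add_assoc, add_comm 1 s]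

theorem shiftDet_add_three (s n : ℕ) :
    shiftDet (s + 3) (n + 1) =
      shiftDet (s + 2) (n + 1) + shiftDet (s + 1) (n + 1) + shiftDet s (n + 1) := by
  have h : (fun i => trib (i + (s + 3))) =
      (fun i => trib (i + (s + 2))) + (fun i => trib (i + (s + 1))) + fun i => trib (i + s) := by
    funext i
    rw [show i + (s + 3) = i + s + 3 by omega, trib]
    simp only [Pi.add_apply, add_assoc]
  rw [shiftDet, h, det_hessenbergCol_add, det_hessenbergCol_add]
  rfl

theorem THdet_seq_add_four (n : ℕ) :
    THdet seq (n + 4) = THdet seq (n + 2) - THdet seq (n + 3) := by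
  simp only [THdet_seq, shiftDet_add_two, shiftDet_add_three 0 n, trib]
  ring

theorem THdet_seq_add_two : ∀ m : ℕ, THdet seq (m + 2) = (-1) ^ (m + 1) * (Nat.fib m : ℤ)
  | 0 => by simp [THdet, Matrix.det_fin_two, seq, trib]
  | 1 => by simp [THdet, Matrix.det_fin_three, seq, trib]
  | k + 2 => by
    rw [THdet_seq_add_four, THdet_seq_add_two k, THdet_seq_add_two (k + 1), Nat.fib_add_two]
    push_cast
    ring

end Trib

theorem stmt_0 (n : ℕ) (hn : 2 ≤ n) :
    THdet (fun k => if k = 0 then 1 else trib (k - 1)) n =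
      (-1) ^ (n - 1) * (Nat.fib (n - 2) : ℤ) := by
  obtain ⟨m, rfl⟩ : ∃ m, n = m + 2 := ⟨n - 2, by omega⟩
  exact Trib.THdet_seq_add_two m
end

section
/- Let {T_n} be the tribonacci numbers and {P_n} the Padovan numbers. For every integer n ≥ 1, the Toeplitz–Hessenberg determinant det(1; T_2, T_3, …, T_{n+1}) equals (−1)^{n−1} P_{n+2}. -/
/-- The Padovan numbers: `P 0 = 1`, `P 1 = P 2 = 0`,
`P n = P (n-2) + P (n-3)` for `n ≥ 3`. -/
def padovan : ℕ → ℤ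
  | 0 => 1
  | 1 => 0
  | 2 => 0
  | n + 3 => padovan (n + 1) + padovan n

lemma trib_add3 (n : ℕ) : trib (n + 3) = trib (n + 2) + trib (n + 1) + trib n := rfl

lemma padovan_add3 (n : ℕ) : padovan (n + 3) = padovan (n + 1) + padovan n := rfl

lemma trib_congr {a b : ℕ} (h : a = b) : trib a = trib b := by rw [h]

/-- Entry of the generalized Hessenberg matrix: first column shifted by `s`. -/
def ent (s i j : ℕ) : ℤ :=
  if j = 0 then trib (i + 2 + s)
  else if j ≤ i + 1 then (if i + 1 - j = 0 then 1 else trib (i + 2 - j))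
  else 0

def Mmat (s n : ℕ) : Matrix (Fin n) (Fin n) ℤ :=
  Matrix.of fun i j => ent s (i : ℕ) (j : ℕ)

lemma ent_shift0 (s i j : ℕ) : ent s (i + 1) (j + 1) = ent 0 i j := by
  unfold ent
  rcases Nat.eq_zero_or_pos j with hj | hj
  · subst hj
    rw [if_neg (show ¬ (0 + 1 = 0) by omega), if_pos (show 0 + 1 ≤ i + 1 + 1 by omega),
      if_neg (show ¬ (i + 1 + 1 - (0 + 1) = 0) by omega), if_pos rfl]
    exact trib_congr (by omega)
  · rw [if_neg (show ¬ (j + 1 = 0) by omega), if_neg (show ¬ (j = 0) by omega)]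
    by_cases h : j ≤ i + 1
    · rw [if_pos (show j + 1 ≤ i + 1 + 1 by omega), if_pos h]
      by_cases h2 : i + 1 - j = 0
      · rw [if_pos (show i + 1 + 1 - (j + 1) = 0 by omega), if_pos h2]
      · rw [if_neg (show ¬ (i + 1 + 1 - (j + 1) = 0) by omega), if_neg h2]
        exact trib_congr (by omega)
    · rw [if_neg (show ¬ (j + 1 ≤ i + 1 + 1) by omega), if_neg h]

lemma ent_shift1 (s i j : ℕ) (hj : 1 ≤ j) : ent s (i + 1) (j + 1) = ent (s + 1) i j := by
  rw [ent_shift0]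
  unfold ent
  rw [if_neg (show ¬ (j = 0) by omega), if_neg (show ¬ (j = 0) by omega)]

lemma ent_col0 (s i : ℕ) : ent s (i + 1) 0 = ent (s + 1) i 0 := by
  unfold ent
  rw [if_pos rfl, if_pos rfl]
  exact trib_congr (by omega)

lemma expand (s n : ℕ) :
    (Mmat s (n + 2)).det =
      trib (s + 2) * (Mmat 0 (n + 1)).det - (Mmat (s + 1) (n + 1)).det := by
  rw [Matrix.det_succ_row_zero, Fin.sum_univ_succ, Fin.sum_univ_succ]
  have hzero : ∀ j : Fin n, Mmat s (n + 2) 0 (j.succ.succ) = 0 := by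
    intro j
    have h2 : ((j.succ.succ : Fin (n + 2)) : ℕ) = (j : ℕ) + 2 := by
      simp [Fin.val_succ]
    simp only [Mmat, Matrix.of_apply, h2, Fin.val_zero]
    unfold ent
    rw [if_neg (by omega), if_neg (by omega)]
  have hsum : (∑ j : Fin n,
      (-1 : ℤ) ^ (((j.succ.succ : Fin (n + 2))) : ℕ) * Mmat s (n + 2) 0 (j.succ.succ) *
        ((Mmat s (n + 2)).submatrix Fin.succ (Fin.succAbove (j.succ.succ))).det) = 0 := by
    apply Finset.sum_eq_zero
    intro j _
    rw [hzero j]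
    ring
  rw [hsum]
  have h00 : Mmat s (n + 2) 0 0 = trib (s + 2) := by
    simp only [Mmat, Matrix.of_apply, Fin.val_zero]
    unfold ent
    rw [if_pos rfl]
    exact trib_congr (by omega)
  have h01 : Mmat s (n + 2) 0 ((0 : Fin (n + 1)).succ) = 1 := by
    have hv : (((0 : Fin (n + 1)).succ : Fin (n + 2)) : ℕ) = 1 := by simp
    simp only [Mmat, Matrix.of_apply, hv, Fin.val_zero]
    unfold ent
    rw [if_neg (by omega), if_pos (by omega), if_pos (by omega)]
  have hsub0 : (Mmat s (n + 2)).submatrix Fin.succ (Fin.succAbove 0) = Mmat 0 (n + 1) := by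
    ext i j
    simp only [Matrix.submatrix_apply, Fin.succAbove_zero, Mmat, Matrix.of_apply, Fin.val_succ]
    exact ent_shift0 s i j
  have hsub1 : (Mmat s (n + 2)).submatrix Fin.succ (Fin.succAbove ((0 : Fin (n + 1)).succ)) =
      Mmat (s + 1) (n + 1) := by
    ext i j
    have hcol : ((Fin.succAbove ((0 : Fin (n + 1)).succ) j : Fin (n + 2)) : ℕ) =
        if (j : ℕ) = 0 then 0 else (j : ℕ) + 1 := by
      by_cases h : (j : ℕ) = 0
      · rw [if_pos h, Fin.succAbove_of_castSucc_lt]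
        · simp [Fin.coe_castSucc, h]
        · rw [Fin.lt_def]
          simp [Fin.coe_castSucc, h, Fin.val_succ]
      · rw [if_neg h, Fin.succAbove_of_le_castSucc]
        · simp [Fin.val_succ]
        · rw [Fin.le_def]
          simp only [Fin.coe_castSucc, Fin.val_succ, Fin.val_zero]
          omega
    simp only [Matrix.submatrix_apply, Mmat, Matrix.of_apply, Fin.val_succ, hcol]
    by_cases h : (j : ℕ) = 0
    · rw [if_pos h, h, ent_col0]
    · rw [if_neg h, ent_shift1 _ _ _ (by omega)]
  rw [hsub0, hsub1, h00, h01]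
  have hv0 : ((0 : Fin (n + 2)) : ℕ) = 0 := rfl
  have hv1 : (((0 : Fin (n + 1)).succ : Fin (n + 2)) : ℕ) = 1 := by simp
  rw [hv0, hv1]
  ring

lemma detM (n : ℕ) : ∀ s : ℕ, (Mmat s (n + 1)).det =
    (-1) ^ n * (padovan (n + 1) * trib (s + 1) +
      (padovan (n + 3) - padovan (n + 2)) * trib (s + 2) + padovan (n + 2) * trib (s + 3)) := by
  induction n with
  | zero =>
    intro s
    have h : (Mmat s 1).det = ent s 0 0 := by
      rw [Matrix.det_fin_one]
      simp only [Mmat, Matrix.of_apply, Fin.val_zero]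
    rw [h]
    unfold ent
    rw [if_pos rfl]
    rw [trib_congr (show 0 + 2 + s = s + 2 by omega)]
    show _ = (-1 : ℤ) ^ 0 * (padovan 1 * trib (s + 1) + (padovan 3 - padovan 2) * trib (s + 2)
      + padovan 2 * trib (s + 3))
    have h1 : padovan 1 = 0 := rfl
    have h2 : padovan 2 = 0 := rfl
    have h3 : padovan 3 = 1 := by rw [show (3 : ℕ) = 0 + 3 from rfl, padovan_add3]; rfl
    rw [h1, h2, h3]
    ring
  | succ n ih =>
    intro s
    rw [show n + 1 + 1 = n + 2 from rfl, expand, ih 0, ih (s + 1)]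
    rw [trib_add3 (s + 1)]
    rw [padovan_add3 (n + 1)]
    simp only [show s + 1 + 1 = s + 2 from rfl, show s + 1 + 2 = s + 3 from rfl,
      show n + 1 + 2 = n + 3 from rfl, show (0 : ℕ) + 1 = 1 from rfl,
      show (0 : ℕ) + 2 = 2 from rfl, show (0 : ℕ) + 3 = 3 from rfl]
    rw [padovan_add3 n]
    have t1 : trib 1 = 0 := rfl
    have t2 : trib 2 = 1 := rfl
    have t3 : trib 3 = 1 := by rw [show (3 : ℕ) = 0 + 3 from rfl, trib_add3]; rfl
    rw [t1, t2, t3]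
    ring

theorem stmt_1 (n : ℕ) (hn : 1 ≤ n) :
    THdet (fun k => if k = 0 then 1 else trib (k + 1)) n =
      (-1) ^ (n - 1) * padovan (n + 2) := by
  obtain ⟨m, rfl⟩ : ∃ m, n = m + 1 := ⟨n - 1, by omega⟩
  have hM : THdet (fun k => if k = 0 then 1 else trib (k + 1)) (m + 1) =
      (Mmat 0 (m + 1)).det := by
    unfold THdet Mmat
    congr 1
    ext i j
    simp only [Matrix.of_apply]
    unfold ent
    by_cases hj : (j : ℕ) = 0
    · rw [hj, if_pos rfl, if_pos (by omega)]
      rw [if_neg (show ¬ ((i : ℕ) + 1 - 0 = 0) by omega)]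
      exact trib_congr (by omega)
    · rw [if_neg hj]
      by_cases h : (j : ℕ) ≤ (i : ℕ) + 1
      · rw [if_pos h, if_pos h]
        by_cases h2 : (i : ℕ) + 1 - (j : ℕ) = 0
        · rw [if_pos h2, h2, if_pos rfl]
        · rw [if_neg h2, if_neg h2]
          exact trib_congr (by omega)
      · rw [if_neg h, if_neg h]
  rw [hM, detM m 0]
  have t1 : trib 1 = 0 := rfl
  have t2 : trib 2 = 1 := rfl
  have t3 : trib 3 = 1 := by rw [show (3 : ℕ) = 0 + 3 from rfl, trib_add3]; rfl
  simp only [show (0 : ℕ) + 1 = 1 from rfl, show (0 : ℕ) + 2 = 2 from rfl,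
    show (0 : ℕ) + 3 = 3 from rfl, t1, t2, t3]
  rw [show m + 1 - 1 = m from rfl, show m + 1 + 2 = m + 3 from rfl]
  ring
end

section
/- Let {T_n} be the tribonacci numbers. For every integer n ≥ 1, the Toeplitz–Hessenberg determinant det(−1; T_0, T_1, …, T_{n−1}) equals ⌊(2^n + 6)/14⌋. -/
/-! Expanding `D n = det(-1; T 0, …, T (n - 1))` along its first column gives the convolution
`D (n + 1) = ∑_{i + j = n} T i * D j`. The tribonacci recurrence turns it into
`D (n + 4) = D (n + 3) + D (n + 2) + 2 * D (n + 1)`, whose characteristic polynomial is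
`(X - 2) * (X ^ 2 + X + 1)`. Hence `14 * D (n + 1) - 2 ^ (n + 1)` is 3-periodic, with values
`-2, -4, 6`, so `2 ^ n + 6 - 14 * D n` is always `8`, `10` or `0`. -/

open Finset

section ToeplitzHessenberg

variable {R : Type*} [CommRing R] (a : ℕ → R)

def toeplitzHessenberg (n : ℕ) : Matrix (Fin n) (Fin n) R :=
  Matrix.of fun i j => if (j : ℕ) ≤ (i : ℕ) + 1 then a ((i : ℕ) + 1 - (j : ℕ)) else 0

theorem toeplitzHessenberg_submatrix_succ_succ (n : ℕ) :
    (toeplitzHessenberg a (n + 1)).submatrix Fin.succ Fin.succ = toeplitzHessenberg a n := by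
  ext i j
  simp [toeplitzHessenberg]

/-- The minor is block lower triangular: an `i × i` lower triangular block with `a 0` on the
diagonal, and a copy of the `(n - i) × (n - i)` Toeplitz–Hessenberg matrix. -/
theorem det_toeplitzHessenberg_submatrix_succAbove_succ (n : ℕ) (i : Fin (n + 1)) :
    ((toeplitzHessenberg a (n + 1)).submatrix i.succAbove Fin.succ).det =
      a 0 ^ (i : ℕ) * (toeplitzHessenberg a (n - i)).det := by
  induction n with
  | zero =>
    cases i using Fin.cases with
    | zero => simp [toeplitzHessenberg_submatrix_succ_succ]
    | succ j => exact j.elim0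
  | succ n ih =>
    cases i using Fin.cases with
    | zero =>
      rw [Fin.succAbove_zero, toeplitzHessenberg_submatrix_succ_succ, Fin.val_zero, Nat.sub_zero,
        pow_zero, one_mul]
    | succ j =>
      set A := (toeplitzHessenberg a (n + 2)).submatrix j.succ.succAbove Fin.succ
      have hpivot : A 0 0 = a 0 := by simp [A, toeplitzHessenberg]
      have hrow (c : Fin n) : A 0 c.succ = 0 := by simp [A, toeplitzHessenberg]
      have hminor : A.submatrix Fin.succ (Fin.succAbove 0) =
          (toeplitzHessenberg a (n + 1)).submatrix j.succAbove Fin.succ := by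
        ext r c
        simp [A, Fin.succ_succAbove_succ, toeplitzHessenberg]
      rw [Matrix.det_succ_row_zero, Fin.sum_univ_succ,
        sum_eq_zero fun c _ => by rw [hrow, mul_zero, zero_mul], add_zero, hpivot, hminor, ih,
        Fin.val_zero, pow_zero, Fin.val_succ, Nat.add_sub_add_right]
      ring

theorem det_toeplitzHessenberg_succ (n : ℕ) :
    (toeplitzHessenberg a (n + 1)).det =
      ∑ p ∈ antidiagonal n, (-a 0) ^ p.1 * a (p.1 + 1) * (toeplitzHessenberg a p.2).det := by
  rw [Matrix.det_succ_column_zero, Finset.Nat.sum_antidiagonal_eq_sum_range_succ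
      (fun i j => (-a 0) ^ i * a (i + 1) * (toeplitzHessenberg a j).det),
    ← Fin.sum_univ_eq_sum_range]
  refine sum_congr rfl fun i _ => ?_
  rw [det_toeplitzHessenberg_submatrix_succAbove_succ, neg_pow,
    show toeplitzHessenberg a (n + 1) i 0 = a (i + 1) by simp [toeplitzHessenberg]]
  ring

end ToeplitzHessenberg

theorem THdet_eq_det_toeplitzHessenberg (a : ℕ → ℤ) (n : ℕ) :
    THdet a n = (toeplitzHessenberg a n).det :=
  rfl

theorem THdet_succ_of_eq_neg_one {a : ℕ → ℤ} (ha : a 0 = -1) (n : ℕ) :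
    THdet a (n + 1) = ∑ p ∈ antidiagonal n, a (p.1 + 1) * THdet a p.2 := by
  simp [THdet_eq_det_toeplitzHessenberg, det_toeplitzHessenberg_succ, ha]

theorem trib_convolution_recurrence {D : ℕ → ℤ}
    (hD : ∀ n, D (n + 1) = ∑ p ∈ antidiagonal n, trib p.1 * D p.2) (n : ℕ) :
    D (n + 4) = D (n + 3) + D (n + 2) + 2 * D (n + 1) := by
  have h4 := hD (n + 3)
  have h3 := hD (n + 2)
  have h2 := hD (n + 1)
  have h1 := hD n
  simp only [Finset.Nat.sum_antidiagonal_succ, trib, add_mul, sum_add_distrib] at h4 h3 h2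
  linear_combination h4 - h3 - h2 - h1

/-- The condition on the initial values kills the `2 ^ n` component, and `X ^ 2 + X + 1`
divides `X ^ 3 - 1`. -/
theorem periodic_three_of_recurrence {R : Type*} [CommRing R] {c : ℕ → R}
    (hc : ∀ n, c (n + 3) = c (n + 2) + c (n + 1) + 2 * c n) (h₀ : c 0 + c 1 + c 2 = 0) :
    Function.Periodic c 3 := by
  have hsum (n : ℕ) : c n + c (n + 1) + c (n + 2) = 0 := by
    induction n with
    | zero => exact h₀
    | succ n ih => linear_combination hc n + 2 * ih
  exact fun n => by linear_combination hc n + hsum n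

theorem eq_floor_of_recurrence {D : ℕ → ℤ}
    (hD : ∀ n, D (n + 4) = D (n + 3) + D (n + 2) + 2 * D (n + 1))
    (h₁ : D 1 = 0) (h₂ : D 2 = 0) (h₃ : D 3 = 1) (n : ℕ) :
    D (n + 1) = ⌊((2 : ℚ) ^ (n + 1) + 6) / 14⌋ := by
  set c : ℕ → ℤ := fun n => 14 * D (n + 1) - 2 ^ (n + 1)
  have hc : Function.Periodic c 3 :=
    periodic_three_of_recurrence (fun n => by simp only [c, hD n]; ring)
      (by simp [c, h₁, h₂, h₃])
  have hcn : c n = -2 ∨ c n = -4 ∨ c n = 6 := by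
    rw [← hc.map_mod_nat]
    have := Nat.mod_lt n (show 3 > 0 by norm_num)
    interval_cases n % 3 <;> simp [c, h₁, h₂, h₃]
  have hcast : ((2 : ℚ) ^ (n + 1) + 6) = ((2 ^ (n + 1) + 6 : ℤ) : ℚ) := by push_cast; rfl
  rw [hcast, show (14 : ℚ) = ((14 : ℕ) : ℚ) by norm_num, Rat.floor_intCast_div_natCast]
  simp only [c] at hcn
  omega

theorem stmt_2 (n : ℕ) (hn : 1 ≤ n) :
    THdet (fun k => if k = 0 then -1 else trib (k - 1)) n =
      ⌊((2 : ℚ) ^ n + 6) / 14⌋ := by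
  set D := THdet (fun k => if k = 0 then -1 else trib (k - 1))
  have hD (m : ℕ) : D (m + 1) = ∑ p ∈ antidiagonal m, trib p.1 * D p.2 := by
    simpa using THdet_succ_of_eq_neg_one (a := fun k => if k = 0 then -1 else trib (k - 1)) rfl m
  have hD₀ : D 0 = 1 := Matrix.det_fin_zero
  obtain ⟨m, rfl⟩ := Nat.exists_eq_add_of_le' hn
  exact eq_floor_of_recurrence (trib_convolution_recurrence hD) (by simp [hD, hD₀, trib])
    (by simp [hD, hD₀, trib, Finset.Nat.sum_antidiagonal_succ])
    (by simp [hD, hD₀, trib, Finset.Nat.sum_antidiagonal_succ]) m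
end

section
/- Let {T_n} be the tribonacci numbers. For every integer n ≥ 2, the Toeplitz–Hessenberg determinant det(−1; T_0, T_2, T_4, …, T_{2n−2}) (an n×n determinant whose subdiagonal entries are the even-indexed tribonacci numbers) equals, as a real number, ((17 + √17)/34)·((3 + √17)/2)^{ n−2} + ((17 − √17)/34)·((3 − √17)/2)^{ n−2}. -/
/-!
Expanding a Toeplitz–Hessenberg determinant along its first row, after shifting its first
column, gives `det_{n+1} = ∑_k (-a_0)^k a_{k+1} det_{n-k}`. For `a_0 = -1` and `a_{k+1} = T_{2k}`
this expresses `det` as a convolution with the even tribonacci numbers, which satisfy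
`T_{2k+6} = 3 T_{2k+4} + T_{2k+2} + T_{2k}`; eliminating the convolution gives
`det_{n+4} = 3 det_{n+3} + 2 det_{n+2}`. Its characteristic roots are `(3 ± √17)/2`, and
`det_2 = 1`, `det_3 = 2` fix the coefficients.
-/

open Finset

namespace THdet

/-- `THdet a` with first column `a (p + 1), a (p + 2), …`: expanding along the first row
turns shift `p` into shift `p + 1`, so the recurrence `THdet_succ` follows by induction. -/
def shiftedMatrix (a : ℕ → ℤ) (p n : ℕ) : Matrix (Fin n) (Fin n) ℤ :=
  Matrix.of fun i j =>
    if (j : ℕ) = 0 then a ((i : ℕ) + 1 + p)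
    else if (j : ℕ) ≤ (i : ℕ) + 1 then a ((i : ℕ) + 1 - (j : ℕ)) else 0

variable (a : ℕ → ℤ)

lemma det_shiftedMatrix_zero (n : ℕ) : (shiftedMatrix a 0 n).det = THdet a n := by
  rw [THdet, shiftedMatrix]
  congr 1
  ext i j
  by_cases hj : (j : ℕ) = 0 <;> simp [hj]

lemma shiftedMatrix_submatrix_succAbove_zero (p n : ℕ) :
    (shiftedMatrix a p (n + 2)).submatrix Fin.succ (Fin.succAbove 0) =
      shiftedMatrix a 0 (n + 1) := by
  ext i j
  simp only [shiftedMatrix, Matrix.submatrix_apply, Matrix.of_apply, Fin.succAbove_zero,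
    Fin.val_succ, Nat.add_one_ne_zero, if_false]
  split_ifs <;> first | rfl | (congr 1; omega)

lemma shiftedMatrix_submatrix_succAbove_one (p n : ℕ) :
    (shiftedMatrix a p (n + 2)).submatrix Fin.succ (Fin.succAbove 1) =
      shiftedMatrix a (p + 1) (n + 1) := by
  ext i j
  have hj : ((Fin.succAbove 1 j : Fin (n + 2)) : ℕ) = if (j : ℕ) = 0 then 0 else (j : ℕ) + 1 := by
    rcases Fin.eq_zero_or_eq_succ j with rfl | ⟨k, rfl⟩
    · rfl
    · simp [Fin.succAbove, Fin.lt_def]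
  simp only [shiftedMatrix, Matrix.submatrix_apply, Matrix.of_apply, Fin.val_succ, hj]
  split_ifs <;> first | rfl | (congr 1; omega) | (exfalso; omega)

lemma det_shiftedMatrix_one (p : ℕ) : (shiftedMatrix a p 1).det = a (p + 1) := by
  simp [shiftedMatrix, Nat.add_comm]

lemma det_shiftedMatrix_succ_succ (p n : ℕ) :
    (shiftedMatrix a p (n + 2)).det =
      a (p + 1) * THdet a (n + 1) - a 0 * (shiftedMatrix a (p + 1) (n + 1)).det := by
  rw [Matrix.det_succ_row_zero, Fin.sum_univ_succ, Fin.sum_univ_succ, sum_eq_zero,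
    shiftedMatrix_submatrix_succAbove_zero, det_shiftedMatrix_zero]
  · rw [Fin.succ_zero_eq_one, shiftedMatrix_submatrix_succAbove_one]
    simp [shiftedMatrix, add_comm 1 p, sub_eq_add_neg]
  · intro j _
    simp [shiftedMatrix]

lemma det_shiftedMatrix_eq_sum (p n : ℕ) :
    (shiftedMatrix a p (n + 1)).det =
      ∑ k ∈ range (n + 1), (-a 0) ^ k * a (p + k + 1) * THdet a (n - k) := by
  induction n generalizing p with
  | zero => rw [det_shiftedMatrix_one]; simp [THdet]
  | succ n ih =>
    rw [det_shiftedMatrix_succ_succ, ih, sum_range_succ' _ (n + 1), mul_sum, sub_eq_add_neg,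
      ← sum_neg_distrib, add_comm]
    congr 1
    · refine sum_congr rfl fun k _ => ?_
      rw [Nat.add_sub_add_right, pow_succ, add_right_comm p 1 k, add_assoc p k 1]
      ring
    · simp

end THdet

theorem THdet_succ (a : ℕ → ℤ) (n : ℕ) :
    THdet a (n + 1) = ∑ k ∈ range (n + 1), (-a 0) ^ k * a (k + 1) * THdet a (n - k) := by
  simpa using (THdet.det_shiftedMatrix_zero a (n + 1)).symm.trans
    (THdet.det_shiftedMatrix_eq_sum a 0 n)

theorem add_four_eq_of_eq_sum_mul {R : Type*} [CommRing R] {c D : ℕ → R} {r s t : R}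
    (hc : ∀ k, c (k + 3) = r * c (k + 2) + s * c (k + 1) + t * c k)
    (hD : ∀ n, D (n + 1) = ∑ k ∈ range (n + 1), c k * D (n - k)) (n : ℕ) :
    D (n + 4) = (r + c 0) * D (n + 3) + (s + c 1 - r * c 0) * D (n + 2) +
      (t + c 2 - r * c 1 - s * c 0) * D (n + 1) := by
  set S : ℕ → R := fun j => ∑ k ∈ range (n + 1), c (k + j) * D (n - k) with hS
  have peel : ∀ j, D (n + j + 1) = ∑ i ∈ range j, c i * D (n + j - i) + S j := by
    intro j
    rw [hD, show n + j + 1 = j + (n + 1) by omega, sum_range_add]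
    congr 1
    refine sum_congr rfl fun k _ => ?_
    rw [add_comm n j, Nat.add_sub_add_left, add_comm j k]
  have hS3 : S 3 = r * S 2 + s * S 1 + t * S 0 := by
    simp only [hS, mul_sum, ← sum_add_distrib]
    refine sum_congr rfl fun k _ => ?_
    rw [hc, add_zero]
    ring
  have d1 : D (n + 1) = S 0 := by simpa using peel 0
  have d2 : D (n + 2) = c 0 * D (n + 1) + S 1 := by simpa [sum_range_succ] using peel 1
  have d3 : D (n + 3) = c 0 * D (n + 2) + c 1 * D (n + 1) + S 2 := by
    simpa [sum_range_succ] using peel 2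
  have d4 : D (n + 4) = c 0 * D (n + 3) + c 1 * D (n + 2) + c 2 * D (n + 1) + S 3 := by
    simpa [sum_range_succ] using peel 3
  linear_combination d4 - r * d3 - s * d2 - t * d1 + hS3

lemma trib_add_six (m : ℕ) : trib (m + 6) = 3 * trib (m + 4) + trib (m + 2) + trib m := by
  simp only [trib]
  ring

lemma eq_binet_of_rec {u : ℕ → ℝ} (h0 : u 0 = 1) (h1 : u 1 = 2)
    (h : ∀ m, u (m + 2) = 3 * u (m + 1) + 2 * u m) (m : ℕ) :
    u m = (17 + √17) / 34 * ((3 + √17) / 2) ^ m + (17 - √17) / 34 * ((3 - √17) / 2) ^ m := by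
  have hs : √17 ^ 2 = 17 := Real.sq_sqrt (by norm_num)
  induction m using Nat.twoStepInduction with
  | zero => rw [h0]; ring
  | one => rw [h1]; linear_combination (-1 / 34 : ℝ) * hs
  | more m ih0 ih1 =>
    rw [h, ih0, ih1]
    linear_combination
      -((17 + √17) / 34 * ((3 + √17) / 2) ^ m + (17 - √17) / 34 * ((3 - √17) / 2) ^ m) / 4 * hs

theorem stmt_3 (n : ℕ) (hn : 2 ≤ n) :
    ((THdet (fun k => if k = 0 then -1 else trib (2 * k - 2)) n : ℤ) : ℝ) =
      (17 + Real.sqrt 17) / 34 * ((3 + Real.sqrt 17) / 2) ^ (n - 2) +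
        (17 - Real.sqrt 17) / 34 * ((3 - Real.sqrt 17) / 2) ^ (n - 2) := by
  set D := THdet (fun k => if k = 0 then -1 else trib (2 * k - 2))
  have hD : ∀ n, D (n + 1) = ∑ k ∈ range (n + 1), trib (2 * k) * D (n - k) := by
    intro n
    simp [D, THdet_succ, mul_add]
  have hD0 : D 0 = 1 := Matrix.det_isEmpty
  have hD2 : D 2 = 1 := by simp [hD, sum_range_succ, hD0, trib]
  have hD3 : D 3 = 2 := by simp [hD, sum_range_succ, hD0, trib]
  have hrec : ∀ m, D (m + 4) = 3 * D (m + 3) + 2 * D (m + 2) := by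
    intro m
    have := add_four_eq_of_eq_sum_mul (r := 3) (s := 1) (t := 1)
      (fun k => by simpa [mul_add] using trib_add_six (2 * k)) hD m
    simpa [trib] using this
  obtain ⟨m, rfl⟩ := Nat.exists_eq_add_of_le' hn
  rw [Nat.add_sub_cancel]
  refine eq_binet_of_rec (u := fun m => (D (m + 2) : ℝ)) ?_ ?_ (fun m => ?_) m
  · simp [hD2]
  · simp [hD3]
  · exact_mod_cast hrec m
end

section
/- Let {T_n} be the tribonacci numbers. For every integer n ≥ 1, the Toeplitz–Hessenberg determinant det(1; T_1, T_2, …, T_n) equals (−1)^{n−1} · Σ_{i=0}^{⌊(n−2)/3⌋} C(n−2−2i, i), where the sum is empty (equal to 0) when n < 2. -/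
namespace Stmt4aux

def a : ℕ → ℤ := fun k => if k = 0 then 1 else trib k

def Bmat (k n : ℕ) : Matrix (Fin n) (Fin n) ℤ :=
  Matrix.of fun i j => if (j : ℕ) = 0 then a ((i : ℕ) + 1 + k)
    else if (j : ℕ) ≤ (i : ℕ) + 1 then a ((i : ℕ) + 1 - (j : ℕ)) else 0

def E (k n : ℕ) : ℤ := (Bmat k n).det

lemma a_succ (m : ℕ) : a (m + 1) = trib (m + 1) := if_neg (by omega)

lemma E_one (k : ℕ) : E k 1 = a (k + 1) := by
  simp [E, Bmat, Matrix.det_fin_one]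
  ring_nf

lemma succAbove_one_val {n : ℕ} (j : Fin (n + 1)) :
    (((1 : Fin (n + 2)).succAbove j) : ℕ) = if (j : ℕ) = 0 then 0 else (j : ℕ) + 1 := by
  rcases j with ⟨j, hj⟩
  simp [Fin.succAbove, Fin.lt_def]
  split_ifs <;> simp_all <;> omega

lemma E_rec (k n : ℕ) : E k (n + 2) = a (k + 1) * E 0 (n + 1) - a 0 * E (k + 1) (n + 1) := by
  unfold E
  rw [show (n + 2) = (n + 1).succ from rfl, Matrix.det_succ_row_zero,
    Fin.sum_univ_succ, Fin.sum_univ_succ]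
  have hz : ∀ j : Fin n, ((-1 : ℤ) ^ ((j.succ.succ : Fin (n+2)) : ℕ) *
      Bmat k (n+2) 0 j.succ.succ *
      ((Bmat k (n+2)).submatrix Fin.succ (Fin.succAbove j.succ.succ)).det) = 0 := by
    intro j
    have : Bmat k (n+2) 0 j.succ.succ = 0 := by
      simp [Bmat, Fin.val_succ]
    rw [this]; ring
  rw [Finset.sum_eq_zero (fun j _ => hz j)]
  have h00 : Bmat k (n+2) 0 0 = a (k + 1) := by
    simp [Bmat]; ring_nf
  have h01 : Bmat k (n+2) 0 1 = a 0 := by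
    simp [Bmat]
  have hsub0 : (Bmat k (n+2)).submatrix Fin.succ ((0 : Fin (n+2)).succAbove) =
      Bmat 0 (n+1) := by
    ext i j
    simp only [Matrix.submatrix_apply, Fin.succAbove_zero, Bmat, Matrix.of_apply,
      Fin.val_succ]
    split_ifs
    all_goals first | rfl | omega | (exfalso; assumption) | (exfalso; omega) | (congr 1; omega)
  have hsub1 : (Bmat k (n+2)).submatrix Fin.succ ((1 : Fin (n+2)).succAbove) =
      Bmat (k+1) (n+1) := by
    ext i j
    simp only [Matrix.submatrix_apply, Bmat, Matrix.of_apply, Fin.val_succ,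
      succAbove_one_val]
    split_ifs
    all_goals first | rfl | omega | (exfalso; assumption) | (exfalso; omega) | (congr 1; omega)
  simp only [Fin.succ_zero_eq_one, h00, h01, hsub0, hsub1, Fin.val_zero, Fin.val_one,
    pow_zero, pow_one]
  ring

end Stmt4aux

namespace Stmt4aux2
open Stmt4aux

lemma Bmat_eq_update (k n : ℕ) : Bmat k (n + 1) =
    (Bmat 0 (n + 1)).updateCol 0 (fun i => a ((i : ℕ) + 1 + k)) := by
  ext i j
  rw [Matrix.updateCol_apply]
  by_cases h : j = (0 : Fin (n + 1))
  · subst h; simp [Bmat]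
  · have hj : ¬((j : ℕ) = 0) := fun hc => h (Fin.ext hc)
    simp [Bmat, hj, h]

lemma a_rec (p : ℕ) : a (p + 1 + 3) = a (p + 1 + 2) + a (p + 1 + 1) + a (p + 1) := by
  show a ((p + 3) + 1) = a ((p + 2) + 1) + a ((p + 1) + 1) + a (p + 1)
  rw [a_succ (p + 3), a_succ (p + 2), a_succ (p + 1), a_succ p]
  rfl

lemma E_shift (k n : ℕ) :
    E (k + 3) (n + 1) = E (k + 2) (n + 1) + E (k + 1) (n + 1) + E k (n + 1) := by
  unfold E
  rw [Bmat_eq_update (k+3), Bmat_eq_update (k+2), Bmat_eq_update (k+1), Bmat_eq_update k]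
  have hc : (fun i : Fin (n+1) => a ((i : ℕ) + 1 + (k + 3))) =
      ((fun i : Fin (n+1) => a ((i : ℕ) + 1 + (k + 2))) +
        (fun i : Fin (n+1) => a ((i : ℕ) + 1 + (k + 1)))) +
        (fun i : Fin (n+1) => a ((i : ℕ) + 1 + k)) := by
    funext i
    show a ((i : ℕ) + 1 + (k + 3)) = a ((i : ℕ) + 1 + (k + 2)) + a ((i : ℕ) + 1 + (k + 1))
      + a ((i : ℕ) + 1 + k)
    have h1 : (i : ℕ) + 1 + (k + 3) = ((i : ℕ) + k) + 1 + 3 := by omega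
    have h2 : (i : ℕ) + 1 + (k + 2) = ((i : ℕ) + k) + 1 + 2 := by omega
    have h3 : (i : ℕ) + 1 + (k + 1) = ((i : ℕ) + k) + 1 + 1 := by omega
    have h4 : (i : ℕ) + 1 + k = ((i : ℕ) + k) + 1 := by omega
    rw [h1, h2, h3, h4, a_rec]
  rw [hc, Matrix.det_updateCol_add, Matrix.det_updateCol_add]

end Stmt4aux2

namespace Stmt4aux3
open Stmt4aux Stmt4aux2

lemma ha0 : a 0 = 1 := by decide
lemma ha1 : a 1 = 0 := by decide
lemma ha2 : a 2 = 1 := by decide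
lemma ha3 : a 3 = 1 := by decide
lemma ha4 : a 4 = 2 := by decide

lemma D1 : E 0 1 = 0 := by rw [E_one]; decide
lemma D2 : E 0 2 = -1 := by
  have e02 : E 0 2 = a 1 * E 0 1 - a 0 * E 1 1 := E_rec 0 0
  have e11 : E 1 1 = a 2 := E_one 1
  rw [e02, e11, D1, ha0, ha1, ha2]; ring
lemma E12 : E 1 2 = -1 := by
  have h : E 1 2 = a 2 * E 0 1 - a 0 * E 2 1 := E_rec 1 0
  have e21 : E 2 1 = a 3 := E_one 2
  rw [h, e21, D1, ha0, ha2, ha3]; ring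
lemma E22 : E 2 2 = -2 := by
  have h : E 2 2 = a 3 * E 0 1 - a 0 * E 3 1 := E_rec 2 0
  have e31 : E 3 1 = a 4 := E_one 3
  rw [h, e31, D1, ha0, ha3, ha4]; ring
lemma D3 : E 0 3 = 1 := by
  have h : E 0 3 = a 1 * E 0 2 - a 0 * E 1 2 := E_rec 0 1
  rw [h, D2, E12, ha0, ha1]; ring
lemma E13 : E 1 3 = 1 := by
  have h : E 1 3 = a 2 * E 0 2 - a 0 * E 2 2 := E_rec 1 1
  rw [h, D2, E22, ha0, ha2]; ring
lemma D4 : E 0 4 = -1 := by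
  have h : E 0 4 = a 1 * E 0 3 - a 0 * E 1 3 := E_rec 0 2
  rw [h, D3, E13, ha0, ha1]; ring

lemma D_rec (n : ℕ) : E 0 (n + 4) = -E 0 (n + 3) - E 0 (n + 1) := by
  have r1 : E 0 (n+4) = a 1 * E 0 (n+3) - a 0 * E 1 (n+3) := E_rec 0 (n+2)
  have r2 : E 1 (n+3) = a 2 * E 0 (n+2) - a 0 * E 2 (n+2) := E_rec 1 (n+1)
  have r3 : E 2 (n+2) = a 3 * E 0 (n+1) - a 0 * E 3 (n+1) := E_rec 2 n
  have r4 : E 3 (n+1) = E 2 (n+1) + E 1 (n+1) + E 0 (n+1) := E_shift 0 n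
  have r5 : E 0 (n+3) = a 1 * E 0 (n+2) - a 0 * E 1 (n+2) := E_rec 0 (n+1)
  have r6 : E 1 (n+2) = a 2 * E 0 (n+1) - a 0 * E 2 (n+1) := E_rec 1 n
  have r7 : E 0 (n+2) = a 1 * E 0 (n+1) - a 0 * E 1 (n+1) := E_rec 0 n
  rw [ha0, ha1, ha2] at *
  rw [ha3] at r3
  linarith

def f (m : ℕ) : ℕ := ∑ i ∈ Finset.range (m / 3 + 1), (m - 2 * i).choose i

lemma pas (m i : ℕ) : (m + 1 - 2 * i).choose (i + 1) =
    (m - 2 * i).choose i + (m - 2 * i).choose (i + 1) := by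
  rcases le_or_gt (2 * i) m with h | h
  · rw [show m + 1 - 2 * i = (m - 2 * i) + 1 by omega, Nat.choose_succ_succ]
  · rw [Nat.choose_eq_zero_of_lt (by omega), Nat.choose_eq_zero_of_lt (by omega),
      Nat.choose_eq_zero_of_lt (by omega)]

lemma f_big (m N : ℕ) (h : m / 3 + 1 ≤ N) :
    f m = ∑ i ∈ Finset.range N, (m - 2 * i).choose i := by
  apply Finset.sum_subset (Finset.range_subset_range.2 h)
  intro i hi hni
  simp only [Finset.mem_range, not_lt] at hni
  exact Nat.choose_eq_zero_of_lt (by omega)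

lemma f_rec (m : ℕ) : f (m + 3) = f (m + 2) + f m := by
  have e1 : f (m + 3) = ∑ i ∈ Finset.range (m / 3 + 2), (m + 3 - 2 * i).choose i := by
    rw [f, show (m + 3) / 3 + 1 = m / 3 + 2 by omega]
  have e2 : f (m + 2) = ∑ i ∈ Finset.range (m / 3 + 2), (m + 2 - 2 * i).choose i :=
    f_big (m + 2) _ (by omega)
  rw [e1, e2, Finset.sum_range_succ', Finset.sum_range_succ'
    (fun i => (m + 2 - 2 * i).choose i)]
  have hterm : ∀ i, (m + 3 - 2 * (i + 1)).choose (i + 1) =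
      (m + 2 - 2 * (i + 1)).choose (i + 1) + (m - 2 * i).choose i := by
    intro i
    rw [show m + 3 - 2 * (i + 1) = m + 1 - 2 * i by omega,
      show m + 2 - 2 * (i + 1) = m - 2 * i by omega, pas]
    ring
  rw [Finset.sum_congr rfl (fun i _ => hterm i), Finset.sum_add_distrib]
  have : (∑ i ∈ Finset.range (m / 3 + 1), (m - 2 * i).choose i) = f m := rfl
  rw [this]
  simp
  ring

def Sn (n : ℕ) : ℕ := if n < 2 then 0 else f (n - 2)

lemma main : ∀ n : ℕ, E 0 (n + 1) = (-1) ^ n * (Sn (n + 1) : ℤ) := by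
  intro n
  induction n using Nat.strong_induction_on with
  | _ n ih =>
    match n with
    | 0 => rw [D1]; simp [Sn]
    | 1 => rw [D2]; norm_num [Sn]; decide
    | 2 => rw [D3]; norm_num [Sn]; decide
    | 3 => rw [D4]; norm_num [Sn]; decide
    | (m + 4) =>
      have i3 := ih (m + 3) (by omega)
      have i1 := ih (m + 1) (by omega)
      have hD : E 0 (m + 5) = -E 0 (m + 4) - E 0 (m + 2) := D_rec (m + 1)
      have h5 : Sn (m + 4 + 1) = f (m + 3) := by
        simp only [Sn, if_neg (by omega : ¬ (m + 4 + 1 < 2))]; congr 1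
      have h4 : Sn (m + 3 + 1) = f (m + 2) := by
        simp only [Sn, if_neg (by omega : ¬ (m + 3 + 1 < 2))]; congr 1
      have h2 : Sn (m + 1 + 1) = f m := by
        simp only [Sn, if_neg (by omega : ¬ (m + 1 + 1 < 2))]; congr 1
      have hS : (Sn (m + 4 + 1) : ℤ) = (Sn (m + 3 + 1) : ℤ) + (Sn (m + 1 + 1) : ℤ) := by
        rw [h5, h4, h2, f_rec]; push_cast; ring
      have hD' : E 0 (m + 4 + 1) = -E 0 (m + 3 + 1) - E 0 (m + 1 + 1) := D_rec (m + 1)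
      linear_combination hD' - i3 - i1 - ((-1 : ℤ)) ^ (m + 4) * hS

end Stmt4aux3

open Stmt4aux Stmt4aux2 Stmt4aux3 in
theorem stmt_4 (n : ℕ) (hn : 1 ≤ n) :
    THdet (fun k => if k = 0 then 1 else trib k) n =
      (-1) ^ (n - 1) *
        ∑ i ∈ Finset.range (if n < 2 then 0 else (n - 2) / 3 + 1),
          ((n - 2 - 2 * i).choose i : ℤ) := by
  obtain ⟨m, rfl⟩ : ∃ m, n = m + 1 := ⟨n - 1, by omega⟩
  have hT : THdet a (m + 1) = E 0 (m + 1) := by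
    unfold THdet E Bmat
    congr 1
    ext i j
    simp only [Matrix.of_apply]
    split_ifs
    all_goals first | rfl | omega | (exfalso; assumption) | (exfalso; omega) | (congr 1; omega)
  have hsum : ∑ i ∈ Finset.range (if m + 1 < 2 then 0 else (m + 1 - 2) / 3 + 1),
      ((m + 1 - 2 - 2 * i).choose i : ℤ) = (Sn (m + 1) : ℤ) := by
    by_cases h : m + 1 < 2
    · rw [if_pos h, Sn, if_pos h]; simp
    · rw [if_neg h, Sn, if_neg h, f, Nat.cast_sum]
  show THdet a (m + 1) = _
  rw [hT, main m, Nat.add_sub_cancel, hsum]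
end

section
/- Let {T_n} be the tribonacci numbers. For every integer n ≥ 1, the Toeplitz–Hessenberg determinant det(1; T_1, T_3, T_5, …, T_{2n−1}) (an n×n determinant whose subdiagonal entries are the odd-indexed tribonacci numbers) equals (−1)^{n−1} · ⌊4·3^{n−3}⌋, where 4·3^{n−3} is interpreted as a rational number (so the floor is 0 when n = 1 and 1 when n = 2). -/
namespace Stmt6Aux

def a : ℕ → ℤ := fun k => if k = 0 then 1 else trib (2 * k - 1)

lemma trib_rec (k : ℕ) : trib (k + 3) = trib (k + 2) + trib (k + 1) + trib k := rfl

lemma trib6 : ∀ m, trib (m + 6) = 3 * trib (m + 4) + trib (m + 2) + trib m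
  | 0 => by norm_num [trib]
  | 1 => by norm_num [trib]
  | 2 => by norm_num [trib]
  | (m + 3) => by
      have h0 := trib6 m
      have h1 := trib6 (m + 1)
      have h2 := trib6 (m + 2)
      have r1 := trib_rec (m + 6)
      have r2 := trib_rec (m + 4)
      have r3 := trib_rec (m + 2)
      have r4 := trib_rec m
      show trib (m + 9) = 3 * trib (m + 7) + trib (m + 5) + trib (m + 3)
      have r5 := trib_rec (m + 5)
      have r6 := trib_rec (m + 3)
      linarith

lemma a_rec : ∀ k, a (k + 3) = 3 * a (k + 2) + a (k + 1) + a k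
  | 0 => by norm_num [a, trib]
  | (k + 1) => by
      simp only [a, if_neg (by omega : ¬(k + 1 + 3 = 0)),
        if_neg (by omega : ¬(k + 1 + 2 = 0)), if_neg (by omega : ¬(k + 1 + 1 = 0)),
        if_neg (by omega : ¬(k + 1 = 0))]
      rw [show 2 * (k + 1 + 3) - 1 = (2 * k + 1) + 6 by omega,
        show 2 * (k + 1 + 2) - 1 = (2 * k + 1) + 4 by omega,
        show 2 * (k + 1 + 1) - 1 = (2 * k + 1) + 2 by omega,
        show 2 * (k + 1) - 1 = 2 * k + 1 by omega]
      exact trib6 (2 * k + 1)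

def M (n : ℕ) : Matrix (Fin n) (Fin n) ℤ :=
  Matrix.of fun i j => if (j : ℕ) ≤ (i : ℕ) + 1 then a ((i : ℕ) + 1 - (j : ℕ)) else 0

def E (n : ℕ) : Matrix (Fin n) (Fin n) ℤ :=
  Matrix.of fun i j =>
    if (j : ℕ) = (i : ℕ) then 1
    else if 3 ≤ (i : ℕ) ∧ (j : ℕ) + 1 = (i : ℕ) then -3
    else if 3 ≤ (i : ℕ) ∧ (j : ℕ) + 2 = (i : ℕ) then -1
    else if 3 ≤ (i : ℕ) ∧ (j : ℕ) + 3 = (i : ℕ) then -1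
    else 0

def N (n : ℕ) : Matrix (Fin n) (Fin n) ℤ :=
  Matrix.of fun i j =>
    if (i : ℕ) < 3 then (if (j : ℕ) ≤ (i : ℕ) + 1 then a ((i : ℕ) + 1 - (j : ℕ)) else 0)
    else if (j : ℕ) = (i : ℕ) then -3
    else if (j : ℕ) = (i : ℕ) + 1 then 1
    else 0

lemma det_E (n : ℕ) : (E n).det = 1 := by
  rw [Matrix.det_of_lowerTriangular (E n)]
  · simp [E]
  · intro i j hij
    simp only [E, Matrix.of_apply]
    simp only [OrderDual.toDual_lt_toDual, Fin.lt_def] at hij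
    rw [if_neg (by omega), if_neg (by omega), if_neg (by omega), if_neg (by omega)]

lemma EM (n : ℕ) : E n * M n = N n := by
  ext i j
  rw [Matrix.mul_apply]
  by_cases hi : (i : ℕ) < 3
  · have key : ∀ k : Fin n, E n i k * M n k j = if k = i then M n k j else 0 := by
      intro k
      simp only [E, Matrix.of_apply, Fin.ext_iff]
      split_ifs <;> omega
    rw [Finset.sum_congr rfl fun k _ => key k, Finset.sum_ite_eq' Finset.univ i]
    simp only [Finset.mem_univ, if_true]
    simp [M, N, hi]
  · push_neg at hi
    have hin : (i : ℕ) < n := i.isLt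
    set k1 : Fin n := ⟨(i : ℕ) - 1, by omega⟩ with hk1
    set k2 : Fin n := ⟨(i : ℕ) - 2, by omega⟩ with hk2
    set k3 : Fin n := ⟨(i : ℕ) - 3, by omega⟩ with hk3
    have key : ∀ k : Fin n, E n i k * M n k j =
        (if k = i then 1 * M n k j else 0) + (if k = k1 then (-3) * M n k j else 0) +
        ((if k = k2 then (-1) * M n k j else 0) + (if k = k3 then (-1) * M n k j else 0)) := by
      intro k
      simp only [E, Matrix.of_apply, Fin.ext_iff, hk1, hk2, hk3, Fin.val_mk]
      split_ifs <;> omega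
    rw [Finset.sum_congr rfl fun k _ => key k]
    simp only [Finset.sum_add_distrib]
    rw [Finset.sum_ite_eq' Finset.univ i, Finset.sum_ite_eq' Finset.univ k1,
      Finset.sum_ite_eq' Finset.univ k2, Finset.sum_ite_eq' Finset.univ k3]
    simp only [Finset.mem_univ, if_true, one_mul]
    have hv1 : (k1 : ℕ) = (i : ℕ) - 1 := rfl
    have hv2 : (k2 : ℕ) = (i : ℕ) - 2 := rfl
    have hv3 : (k3 : ℕ) = (i : ℕ) - 3 := rfl
    simp only [M, N, Matrix.of_apply, hv1, hv2, hv3]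
    rcases lt_trichotomy ((j : ℕ)) ((i : ℕ) - 1) with hj | hj | hj
    · -- j ≤ i - 2 : use the recurrence
      rw [if_pos (by omega), if_pos (by omega), if_pos (by omega), if_pos (by omega),
        if_neg (by omega), if_neg (by omega), if_neg (by omega)]
      have := a_rec ((i : ℕ) - 2 - (j : ℕ))
      rw [show (i : ℕ) + 1 - (j : ℕ) = ((i : ℕ) - 2 - (j : ℕ)) + 3 by omega] 
      rw [show (i : ℕ) - 1 + 1 - (j : ℕ) = ((i : ℕ) - 2 - (j : ℕ)) + 2 by omega]
      rw [show (i : ℕ) - 2 + 1 - (j : ℕ) = ((i : ℕ) - 2 - (j : ℕ)) + 1 by omega]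
      rw [show (i : ℕ) - 3 + 1 - (j : ℕ) = ((i : ℕ) - 2 - (j : ℕ)) by omega]
      linarith
    · -- j = i - 1
      rw [if_pos (by omega), if_pos (by omega), if_pos (by omega), if_neg (by omega),
        if_neg (by omega), if_neg (by omega), if_neg (by omega)]
      rw [show (i : ℕ) + 1 - (j : ℕ) = 2 by omega, show (i : ℕ) - 1 + 1 - (j : ℕ) = 1 by omega,
        show (i : ℕ) - 2 + 1 - (j : ℕ) = 0 by omega]
      norm_num [a, trib]
    · rcases lt_trichotomy ((j : ℕ)) ((i : ℕ)) with hj' | hj' | hj'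
      · omega
      · -- j = i
        rw [if_pos (by omega), if_pos (by omega), if_neg (by omega), if_neg (by omega),
          if_neg (by omega), if_pos (by omega)]
        rw [show (i : ℕ) + 1 - (j : ℕ) = 1 by omega, show (i : ℕ) - 1 + 1 - (j : ℕ) = 0 by omega]
        norm_num [a, trib]
      · rcases eq_or_lt_of_le (Nat.succ_le_of_lt hj') with hj'' | hj''
        · -- j = i + 1
          rw [if_pos (by omega), if_neg (by omega), if_neg (by omega), if_neg (by omega),
            if_neg (by omega), if_neg (by omega), if_pos (by omega)]
          rw [show (i : ℕ) + 1 - (j : ℕ) = 0 by omega]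
          norm_num [a]
        · -- j > i + 1
          rw [if_neg (by omega), if_neg (by omega), if_neg (by omega), if_neg (by omega),
            if_neg (by omega), if_neg (by omega), if_neg (by omega)]
          ring

lemma det_M_eq_det_N (n : ℕ) : (M n).det = (N n).det := by
  rw [← EM n, Matrix.det_mul, det_E, one_mul]

lemma det_N : ∀ m, (N (m + 3)).det = (-3) ^ m * 4
  | 0 => by
      rw [Matrix.det_fin_three]
      norm_num [N, a, trib]
  | (m + 1) => by
      have hsub : (N (m + 1 + 3)).submatrix (Fin.last (m + 3)).succAbove
          (Fin.last (m + 3)).succAbove = N (m + 3) := by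
        ext i j
        simp only [Fin.succAbove_last, Matrix.submatrix_apply, N, Matrix.of_apply,
          Fin.coe_castSucc]
      rw [show m + 1 + 3 = (m + 3) + 1 by ring] at *
      rw [show ((m+3)+1 : ℕ) = (m+3).succ from rfl, Matrix.det_succ_row _ (Fin.last (m + 3))]
      rw [Finset.sum_eq_single (Fin.last (m + 3))]
      · rw [hsub, det_N m]
        have hentry : N ((m + 3) + 1) (Fin.last (m + 3)) (Fin.last (m + 3)) = -3 := by
          simp only [N, Matrix.of_apply, Fin.val_last]
          rw [if_neg (by omega)]
          simp
        rw [hentry]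
        simp only [Fin.val_last]
        rw [show (m + 3) + (m + 3) = 2 * (m + 3) by ring, pow_mul]
        norm_num
        ring
      · intro b _ hb
        have hb' : (b : ℕ) ≠ m + 3 := fun h => hb (Fin.ext (by simp [h]))
        have hb2 : (b : ℕ) < m + 4 := b.isLt
        have hentry : N ((m + 3) + 1) (Fin.last (m + 3)) b = 0 := by
          simp only [N, Matrix.of_apply, Fin.val_last]
          rw [if_neg (by omega), if_neg (by omega), if_neg (by omega)]
        rw [hentry]
        ring
      · intro h
        exact absurd (Finset.mem_univ _) h

end Stmt6Aux

theorem stmt_6 (n : ℕ) (hn : 1 ≤ n) :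
    THdet (fun k => if k = 0 then 1 else trib (2 * k - 1)) n =
      (-1) ^ (n - 1) * ⌊(4 : ℚ) * (3 : ℚ) ^ ((n : ℤ) - 3)⌋ := by
  match n, hn with
  | 1, _ =>
      have h1 : THdet (fun k => if k = 0 then 1 else trib (2 * k - 1)) 1 = 0 := by
        rw [THdet, Matrix.det_fin_one]
        norm_num [trib]
      rw [h1]
      have e : ((1:ℕ):ℤ) - 3 = (-2:ℤ) := by norm_num
      rw [e]
      have hf : ⌊(4:ℚ) * (3:ℚ) ^ (-2:ℤ)⌋ = 0 := by
        apply Int.floor_eq_zero_iff.mpr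
        rw [Set.mem_Ico]
        norm_num
      rw [hf]
      norm_num
  | 2, _ =>
      have h1 : THdet (fun k => if k = 0 then 1 else trib (2 * k - 1)) 2 = -1 := by
        rw [THdet, Matrix.det_fin_two]
        norm_num [trib]
      rw [h1]
      have e : ((2:ℕ):ℤ) - 3 = (-1:ℤ) := by norm_num
      rw [e]
      have hf : ⌊(4:ℚ) * (3:ℚ) ^ (-1:ℤ)⌋ = 1 := by
        have : (4:ℚ) * (3:ℚ) ^ (-1:ℤ) = 4/3 := by norm_num
        rw [this]
        rw [Int.floor_eq_iff]
        norm_num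
      rw [hf]
      norm_num
  | (m + 3), _ =>
      have h1 : THdet (fun k => if k = 0 then 1 else trib (2 * k - 1)) (m + 3)
          = (Stmt6Aux.M (m + 3)).det := rfl
      rw [h1, Stmt6Aux.det_M_eq_det_N, Stmt6Aux.det_N]
      have h2 : ((m + 3 : ℕ) : ℤ) - 3 = (m : ℤ) := by push_cast; ring
      rw [h2, show ((m:ℤ)) = ((m:ℕ) : ℤ) from rfl, zpow_natCast]
      have h3 : (4 : ℚ) * (3 : ℚ) ^ m = ((4 * 3 ^ m : ℤ) : ℚ) := by push_cast; ring
      rw [h3, Int.floor_intCast]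
      rw [show m + 3 - 1 = m + 2 by omega, pow_add, show ((-3 : ℤ)) = (-1) * 3 by ring, mul_pow]
      norm_num
      ring
end

section
/- Let {T_n} be the tribonacci numbers. For every integer n ≥ 4, the Toeplitz–Hessenberg determinant det(1; T_3, T_4, …, T_{n+2}) equals 0. -/
/-- The entry sequence of the determinant, as a named function. -/
def aT : ℕ → ℤ := fun k => if k = 0 then 1 else trib (k + 2)

lemma aT_eq (k : ℕ) : aT k = trib (k + 2) := by
  cases k <;> simp [aT, trib]

lemma trib_rec (k : ℕ) : trib (k + 3) = trib (k + 2) + trib (k + 1) + trib k := rfl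

lemma aT_rec (e : ℕ) : aT (e + 3) = aT (e + 2) + aT (e + 1) + aT e := by
  simp only [aT_eq]
  have := trib_rec (e + 2)
  simp only [show e+2+3 = e+3+2 by omega, show e+2+1 = e+1+2 by omega] at this
  exact this

theorem stmt_7 (n : ℕ) (hn : 4 ≤ n) :
    THdet (fun k => if k = 0 then 1 else trib (k + 2)) n = 0 := by
  obtain ⟨m, rfl⟩ : ∃ m, n = m + 4 := ⟨n - 4, by omega⟩
  show THdet aT (m + 4) = 0
  unfold THdet
  set M : Matrix (Fin (m+4)) (Fin (m+4)) ℤ :=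
    Matrix.of fun i j : Fin (m+4) =>
      if (j : ℕ) ≤ (i : ℕ) + 1 then aT ((i : ℕ) + 1 - (j : ℕ)) else 0 with hM
  set i : Fin (m+4) := ⟨m+3, by omega⟩
  set j1 : Fin (m+4) := ⟨m+2, by omega⟩
  set j2 : Fin (m+4) := ⟨m+1, by omega⟩
  set j3 : Fin (m+4) := ⟨m, by omega⟩
  have hij1 : i ≠ j1 := by simp [i, j1, Fin.ext_iff]
  have hij2 : i ≠ j2 := by simp [i, j2, Fin.ext_iff]
  have hij3 : i ≠ j3 := by simp [i, j3, Fin.ext_iff]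
  -- The last row is the sum of the previous three rows (tribonacci recurrence).
  have key : ∀ j : Fin (m+4), M i j = M j1 j + M j2 j + M j3 j := by
    intro j
    have hj : (j : ℕ) < m + 4 := j.isLt
    simp only [hM, Matrix.of_apply, i, j1, j2, j3]
    rcases Nat.lt_or_ge (j : ℕ) (m+2) with h | h
    · obtain ⟨e, he⟩ : ∃ e, (j : ℕ) + e = m + 1 := ⟨m + 1 - j, by omega⟩
      rw [if_pos (by omega), if_pos (by omega), if_pos (by omega), if_pos (by omega),
        show m+3+1 - (j:ℕ) = e+3 by omega, show m+2+1 - (j:ℕ) = e+2 by omega,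
        show m+1+1 - (j:ℕ) = e+1 by omega, show m+1 - (j:ℕ) = e by omega]
      exact aT_rec e
    · rcases Nat.lt_or_ge (j : ℕ) (m+3) with h' | h'
      · rw [if_pos (by omega), if_pos (by omega), if_pos (by omega), if_neg (by omega),
          show m+3+1 - (j:ℕ) = 2 by omega, show m+2+1 - (j:ℕ) = 1 by omega,
          show m+1+1 - (j:ℕ) = 0 by omega]
        simp [aT, trib]
      · rw [if_pos (by omega), if_pos (by omega), if_neg (by omega), if_neg (by omega),
          show m+3+1 - (j:ℕ) = 1 by omega, show m+2+1 - (j:ℕ) = 0 by omega]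
        simp [aT, trib]
  -- Subtract the three rows from the last row; this makes the last row zero.
  have h1 : (M.updateRow i (M i + (-1 : ℤ) • M j1)).det = M.det :=
    Matrix.det_updateRow_add_smul_self M hij1 (-1)
  set M1 := M.updateRow i (M i + (-1 : ℤ) • M j1) with hM1
  have h2 : (M1.updateRow i (M1 i + (-1 : ℤ) • M1 j2)).det = M1.det :=
    Matrix.det_updateRow_add_smul_self M1 hij2 (-1)
  set M2 := M1.updateRow i (M1 i + (-1 : ℤ) • M1 j2) with hM2
  have h3 : (M2.updateRow i (M2 i + (-1 : ℤ) • M2 j3)).det = M2.det :=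
    Matrix.det_updateRow_add_smul_self M2 hij3 (-1)
  rw [← h1, ← h2, ← h3]
  apply Matrix.det_eq_zero_of_row_eq_zero i
  intro j
  have e1 : M1 i = M i + (-1 : ℤ) • M j1 := Matrix.updateRow_self
  have e1' : M1 j2 = M j2 := Matrix.updateRow_ne (Ne.symm hij2)
  have e1'' : M1 j3 = M j3 := Matrix.updateRow_ne (Ne.symm hij3)
  have e2 : M2 i = M1 i + (-1 : ℤ) • M1 j2 := Matrix.updateRow_self
  have e2' : M2 j3 = M1 j3 := Matrix.updateRow_ne (Ne.symm hij3)
  rw [Matrix.updateRow_self]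
  simp only [Pi.add_apply, Pi.smul_apply, smul_eq_mul, e2, e2', e1, e1', e1'']
  linarith [key j]
end

section
/- Let {T_n} be the tribonacci numbers. For every integer n ≥ 2, the Toeplitz–Hessenberg determinant det(1; T_4, T_5, …, T_{n+3}) equals (−1)^n if n ≡ 0 (mod 3), equals (−1)^{n+1} if n ≡ 1 (mod 3), and equals 0 if n ≡ 2 (mod 3). -/
namespace StmtNine

def a0 : ℕ → ℤ := fun k => if k = 0 then 1 else trib (k + 3)

/-- The TH matrix with column 0 replaced by `b`. -/
def Gmat (b : ℕ → ℤ) (n : ℕ) : Matrix (Fin n) (Fin n) ℤ :=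
  Matrix.of fun i j : Fin n =>
    if (j : ℕ) = 0 then b (i : ℕ)
    else if (j : ℕ) ≤ (i : ℕ) + 1 then a0 ((i : ℕ) + 1 - (j : ℕ)) else 0

def G (b : ℕ → ℤ) (n : ℕ) : ℤ := (Gmat b n).det

lemma THdet_eq_G (n : ℕ) : THdet a0 n = G (fun i => a0 (i + 1)) n := by
  unfold THdet G Gmat
  congr 1
  ext i j
  rcases Nat.eq_zero_or_pos (j : ℕ) with h | h
  · simp [h]
  · have h0 : (j : ℕ) ≠ 0 := h.ne'
    simp [h0]

lemma Gmat_update (b c : ℕ → ℤ) (n : ℕ) :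
    (Gmat b (n+1)).updateCol 0 (fun i => c (i : ℕ)) = Gmat c (n+1) := by
  ext i j
  rw [Matrix.updateCol_apply]
  by_cases hj : j = 0
  · simp [hj, Gmat]
  · have : (j : ℕ) ≠ 0 := fun h => hj (Fin.ext h)
    simp [hj, Gmat, this]

lemma G_add (b c : ℕ → ℤ) (n : ℕ) :
    G (fun i => b i + c i) (n+1) = G b (n+1) + G c (n+1) := by
  unfold G
  have key := Matrix.det_updateCol_add (Gmat b (n+1)) 0
    (fun i : Fin (n+1) => b (i : ℕ)) (fun i : Fin (n+1) => c (i : ℕ))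
  rw [show ((fun i : Fin (n+1) => b (i : ℕ)) + fun i : Fin (n+1) => c (i : ℕ))
      = fun i : Fin (n+1) => b (i : ℕ) + c (i : ℕ) from rfl] at key
  rw [Gmat_update b (fun i => b i + c i), Gmat_update b b, Gmat_update b c] at key
  exact key

lemma expand (b : ℕ → ℤ) (n : ℕ) :
    G b (n+2) = b 0 * G (fun i => a0 (i + 1)) (n+1) - G (fun i => b (i + 1)) (n+1) := by
  unfold G
  rw [Matrix.det_succ_row_zero, Fin.sum_univ_succ, Fin.sum_univ_succ]
  have htail : ∀ j : Fin n,
      (-1 : ℤ) ^ ((j.succ.succ : Fin (n+2)) : ℕ) * Gmat b (n+2) 0 j.succ.succ *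
        ((Gmat b (n+2)).submatrix Fin.succ (j.succ.succ).succAbove).det = 0 := by
    intro j
    have h1 : ((j.succ.succ : Fin (n+2)) : ℕ) = (j : ℕ) + 2 := rfl
    have : Gmat b (n+2) 0 j.succ.succ = 0 := by
      simp [Gmat, h1]
    rw [this]; ring
  rw [Finset.sum_eq_zero (fun j _ => htail j), add_zero, Fin.succ_zero_eq_one]
  have e0 : Gmat b (n+2) 0 0 = b 0 := by simp [Gmat]
  have e1 : Gmat b (n+2) 0 (1 : Fin (n+2)) = 1 := by
    simp [Gmat, a0]
  have hm0 : (Gmat b (n+2)).submatrix Fin.succ ((0 : Fin (n+2)).succAbove)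
      = Gmat (fun i => a0 (i + 1)) (n+1) := by
    rw [Fin.succAbove_zero]
    ext i j
    rcases Nat.eq_zero_or_pos (j : ℕ) with h | h
    · have h2 : ((j.succ : Fin (n+2)) : ℕ) = 1 := by simp [h]
      simp [Gmat, Matrix.submatrix_apply, h, h2]
    · have h0 : (j : ℕ) ≠ 0 := h.ne'
      have h2 : ((j.succ : Fin (n+2)) : ℕ) = (j : ℕ) + 1 := rfl
      simp only [Gmat, Matrix.submatrix_apply, Matrix.of_apply, h2, Fin.val_succ, h0]
      have hc : ((j : ℕ) + 1 = 0) = False := by simp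
      have hc2 : ((j : ℕ) + 1 ≤ (i : ℕ) + 1 + 1) ↔ ((j : ℕ) ≤ (i : ℕ) + 1) := by omega
      have hc3 : (i : ℕ) + 1 + 1 - ((j : ℕ) + 1) = (i : ℕ) + 1 - (j : ℕ) := by omega
      simp [hc, hc2, hc3, h0]
  have hm1 : (Gmat b (n+2)).submatrix Fin.succ ((1 : Fin (n+2)).succAbove)
      = Gmat (fun i => b (i + 1)) (n+1) := by
    ext i j
    have hval : (((1 : Fin (n+2)).succAbove j : Fin (n+2)) : ℕ)
        = if (j : ℕ) < 1 then (j : ℕ) else (j : ℕ) + 1 := by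
      rw [Fin.succAbove]
      split_ifs with h1 h2 h3
      · rfl
      · exact absurd (by simpa [Fin.lt_def] using h1) h2
      · exact absurd (by simpa [Fin.lt_def] using h3) h1
      · rfl
    rcases Nat.eq_zero_or_pos (j : ℕ) with h | h
    · have h0 : (((1 : Fin (n+2)).succAbove j : Fin (n+2)) : ℕ) = 0 := by
        rw [hval]; simp [h]
      rw [Matrix.submatrix_apply]
      simp only [Gmat, Matrix.of_apply]
      rw [h0]
      simp [h, Fin.val_succ]
    · have h0 : (j : ℕ) ≠ 0 := h.ne'
      have hv : (((1 : Fin (n+2)).succAbove j : Fin (n+2)) : ℕ) = (j : ℕ) + 1 := by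
        rw [hval]; simp [Nat.not_lt.mpr h]
      simp only [Gmat, Matrix.submatrix_apply, Matrix.of_apply, hv, Fin.val_succ]
      have hc : ((j : ℕ) + 1 = 0) = False := by simp
      have hc2 : ((j : ℕ) + 1 ≤ (i : ℕ) + 1 + 1) ↔ ((j : ℕ) ≤ (i : ℕ) + 1) := by omega
      have hc3 : (i : ℕ) + 1 + 1 - ((j : ℕ) + 1) = (i : ℕ) + 1 - (j : ℕ) := by omega
      simp [hc, hc2, hc3, h0]
  rw [e0, e1, hm0, hm1]
  norm_num
  ring

def D (n : ℕ) : ℤ := G (fun i => a0 (i + 1)) n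
def G1 (n : ℕ) : ℤ := G (fun i => a0 (i + 2)) n
def G2 (n : ℕ) : ℤ := G (fun i => a0 (i + 3)) n
def G3 (n : ℕ) : ℤ := G (fun i => a0 (i + 4)) n

lemma a0_one : a0 1 = 2 := by norm_num [a0, trib]
lemma a0_two : a0 2 = 4 := by norm_num [a0, trib]
lemma a0_three : a0 3 = 7 := by norm_num [a0, trib]

lemma D_succ (n : ℕ) : D (n+2) = 2 * D (n+1) - G1 (n+1) := by
  have := expand (fun i => a0 (i + 1)) n
  simp only [D, G1] at *
  rw [this, a0_one]

lemma G1_succ (n : ℕ) : G1 (n+2) = 4 * D (n+1) - G2 (n+1) := by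
  have := expand (fun i => a0 (i + 2)) n
  simp only [D, G1, G2] at *
  rw [this, a0_two]

lemma G3_eq (n : ℕ) : G3 (n+1) = G2 (n+1) + G1 (n+1) + D (n+1) := by
  unfold G3 G2 G1 D
  have h : (fun i : ℕ => a0 (i + 4)) = fun i : ℕ => (a0 (i + 3) + a0 (i + 2)) + a0 (i + 1) := by
    funext i
    show a0 (i + 4) = a0 (i + 3) + a0 (i + 2) + a0 (i + 1)
    simp only [a0]
    norm_num
    show trib (i + 4 + 3) = _
    have : i + 4 + 3 = (i + 4) + 3 := rfl
    rw [show i + 4 + 3 = (i + 4) + 3 from rfl, trib]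
  rw [h, G_add, G_add]

lemma G2_succ (n : ℕ) : G2 (n+2) = 7 * D (n+1) - (G2 (n+1) + G1 (n+1) + D (n+1)) := by
  have he := expand (fun i => a0 (i + 3)) n
  have h3 : G (fun i => a0 (i + 3 + 1)) (n+1) = G3 (n+1) := by
    unfold G3; congr 1
  rw [← G3_eq]
  simp only [G2, D, G3] at *
  rw [he, a0_three]

def pat : ℕ → ℤ × ℤ × ℤ := fun n =>
  match n % 6 with
  | 0 => (1, 1, 2)
  | 1 => (1, 2, 3)
  | 2 => (0, 1, 1)
  | 3 => (-1, -1, -2)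
  | 4 => (-1, -2, -3)
  | _ => (0, -1, -1)

lemma det_one (b : ℕ → ℤ) : G b 1 = b 0 := by
  unfold G
  rw [Matrix.det_fin_one]
  simp [Gmat]

lemma base1 : D 1 = 2 ∧ G1 1 = 4 ∧ G2 1 = 7 := by
  refine ⟨?_, ?_, ?_⟩ <;>
    simp [D, G1, G2, det_one, a0_one, a0_two, a0_three]

lemma invariant (m : ℕ) : (D (m+2), G1 (m+2), G2 (m+2)) = pat (m+2) := by
  induction m with
  | zero =>
    obtain ⟨h1, h2, h3⟩ := base1
    have hD := D_succ 0
    have hG1 := G1_succ 0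
    have hG2 := G2_succ 0
    rw [show (0:ℕ)+1 = 1 from rfl, show (0:ℕ)+2 = 2 from rfl] at hD hG1 hG2
    simp only [h1, h2, h3] at hD hG1 hG2
    show (D 2, G1 2, G2 2) = pat 2
    simp only [pat, Prod.mk.injEq]
    refine ⟨by omega, by omega, by omega⟩
  | succ m ih =>
    have hD := D_succ (m+1)
    have hG1 := G1_succ (m+1)
    have hG2 := G2_succ (m+1)
    rw [show m + 1 + 1 = m + 2 from rfl] at hD hG1 hG2
    have hmod : (m + 1 + 2) % 6 = ((m + 2) % 6 + 1) % 6 := by omega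
    have hr : (m + 2) % 6 < 6 := Nat.mod_lt _ (by norm_num)
    set r := (m + 2) % 6 with hrdef
    interval_cases r <;>
      simp only [pat, ← hrdef, hmod, Prod.mk.injEq] at ih ⊢ <;>
      obtain ⟨i1, i2, i3⟩ := ih <;>
      simp only [i1, i2, i3] at hD hG1 hG2 <;>
      exact ⟨by omega, by omega, by omega⟩

end StmtNine

theorem stmt_9 (n : ℕ) (hn : 2 ≤ n) :
    THdet (fun k => if k = 0 then 1 else trib (k + 3)) n =
      if n % 3 = 0 then (-1) ^ n
      else if n % 3 = 1 then (-1) ^ (n + 1)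
      else 0 := by
  obtain ⟨m, rfl⟩ : ∃ m, n = m + 2 := ⟨n - 2, by omega⟩
  have h := StmtNine.invariant m
  have hTH : THdet (fun k => if k = 0 then 1 else trib (k + 3)) (m+2) = StmtNine.D (m+2) := by
    rw [show (fun k : ℕ => if k = 0 then (1:ℤ) else trib (k + 3)) = StmtNine.a0 from rfl]
    exact StmtNine.THdet_eq_G (m+2)
  rw [hTH]
  have hD : StmtNine.D (m+2) = (StmtNine.pat (m+2)).1 := by rw [← h]
  rw [hD]
  have hr : (m + 2) % 6 < 6 := Nat.mod_lt _ (by norm_num)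
  have hm3 : (m + 2) % 3 = (m + 2) % 6 % 3 := by omega
  have hm2 : (m + 2) % 2 = (m + 2) % 6 % 2 := by omega
  set r := (m + 2) % 6 with hrdef
  have hpow : ∀ k : ℕ, (-1 : ℤ) ^ k = if k % 2 = 0 then 1 else -1 := by
    intro k
    rcases Nat.even_or_odd k with h | h
    · rw [h.neg_one_pow]; simp [Nat.even_iff.mp h]
    · rw [h.neg_one_pow]; simp [Nat.odd_iff.mp h]
  interval_cases r <;>
    simp only [StmtNine.pat, ← hrdef, hpow] <;>
    omega
end

section
/- Let {T_n} be the tribonacci numbers. For every integer n ≥ 1, the Toeplitz–Hessenberg determinant det(1; T_5, T_6, …, T_{n+4}) equals Σ_{i=0}^{⌊(n+1)/2⌋} C(n+2+i, n+1−2i). -/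
open Finset

section ToeplitzHessenberg

variable {R : Type*} [CommRing R] (a b : ℕ → R)

def thMatrix (n : ℕ) : Matrix (Fin n) (Fin n) R :=
  Matrix.of fun i j => if (j : ℕ) = 0 then b i else if (j : ℕ) ≤ i + 1 then a (i + 1 - j) else 0

theorem thMatrix_submatrix_succAbove_zero (m : ℕ) :
    (thMatrix a b (m + 2)).submatrix Fin.succ (Fin.succAbove 0) =
      thMatrix a (fun i => a (i + 1)) (m + 1) := by
  ext i k
  simp only [thMatrix, Matrix.submatrix_apply, Fin.zero_succAbove, Matrix.of_apply, Fin.val_succ]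
  by_cases hk : (k : ℕ) = 0
  · simp [hk]
  · simp only [hk, if_false, add_eq_zero, one_ne_zero, and_false]
    split_ifs <;> first | rfl | omega | (congr 1; omega)

theorem thMatrix_submatrix_succAbove_one (m : ℕ) :
    (thMatrix a b (m + 2)).submatrix Fin.succ (Fin.succAbove 1) =
      thMatrix a (fun i => b (i + 1)) (m + 1) := by
  ext i k
  simp only [thMatrix, Matrix.submatrix_apply, Matrix.of_apply, Fin.val_succ]
  by_cases hk : (k : ℕ) = 0
  · have hcol : (1 : Fin (m + 2)).succAbove k = 0 := by
      rw [Fin.succAbove_of_castSucc_lt] <;> simp [Fin.ext_iff, Fin.lt_def, hk]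
    simp [hk, hcol]
  · have hcol : (((1 : Fin (m + 2)).succAbove k : Fin (m + 2)) : ℕ) = k + 1 := by
      have hle : 1 ≤ k.castSucc := Fin.le_def.2 (by rw [Fin.val_one, Fin.val_castSucc]; omega)
      rw [Fin.succAbove_of_le_castSucc _ _ hle, Fin.val_succ]
    simp only [hcol, hk, if_false, add_eq_zero, one_ne_zero, and_false]
    split_ifs <;> first | rfl | omega | (congr 1; omega)

theorem det_thMatrix_succ_succ (m : ℕ) :
    (thMatrix a b (m + 2)).det =
      b 0 * (thMatrix a (fun i => a (i + 1)) (m + 1)).det -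
        a 0 * (thMatrix a (fun i => b (i + 1)) (m + 1)).det := by
  have h00 : thMatrix a b (m + 2) 0 0 = b 0 := by simp [thMatrix]
  have h01 : thMatrix a b (m + 2) 0 1 = a 0 := by simp [thMatrix]
  have hzero (j : Fin m) : thMatrix a b (m + 2) 0 j.succ.succ = 0 := by simp [thMatrix]
  rw [Matrix.det_succ_row_zero, Fin.sum_univ_succ, Fin.sum_univ_succ,
    show (Fin.succ 0 : Fin (m + 2)) = 1 from rfl, thMatrix_submatrix_succAbove_zero,
    thMatrix_submatrix_succAbove_one, h00, h01]
  simp only [hzero, mul_zero, zero_mul, sum_const_zero, add_zero, Fin.val_zero, Fin.val_one,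
    pow_zero, pow_one]
  ring

theorem det_thMatrix_succ (n : ℕ) :
    (thMatrix a b (n + 1)).det =
      ∑ k ∈ range (n + 1), (-a 0) ^ k * b k * (thMatrix a (fun i => a (i + 1)) (n - k)).det := by
  induction n generalizing b with
  | zero => simp [thMatrix]
  | succ n ih =>
    rw [det_thMatrix_succ_succ, ih fun i => b (i + 1), sum_range_succ' _ (n + 1), mul_sum,
      sub_eq_neg_add, ← sum_neg_distrib]
    simp only [pow_zero, one_mul, Nat.sub_zero, pow_succ]
    congr 1
    refine sum_congr rfl fun k _ => ?_
    rw [Nat.add_sub_add_right]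
    ring

end ToeplitzHessenberg

theorem THdet_eq_det_thMatrix (a : ℕ → ℤ) (n : ℕ) :
    THdet a n = (thMatrix a (fun i => a (i + 1)) n).det := by
  unfold THdet thMatrix
  congr 1
  ext i j
  by_cases hj : (j : ℕ) = 0 <;> simp [hj]

theorem THdet_zero (a : ℕ → ℤ) : THdet a 0 = 1 := Matrix.det_isEmpty

def tribEntry (k : ℕ) : ℤ := if k = 0 then 1 else trib (k + 4)

theorem tribEntry_add_three {k : ℕ} (hk : k ≠ 0) :
    tribEntry (k + 3) = tribEntry (k + 2) + tribEntry (k + 1) + tribEntry k := by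
  simp only [tribEntry, hk, if_false, add_eq_zero, one_ne_zero, OfNat.ofNat_ne_zero, and_false]
  exact trib.eq_4 (k + 4)

def tribConv (m n : ℕ) : ℤ :=
  ∑ k ∈ range (n + 1), (-1) ^ k * tribEntry (k + m) * THdet tribEntry (n - k)

theorem tribConv_one (n : ℕ) : tribConv 1 n = THdet tribEntry (n + 1) := by
  simp [tribConv, THdet_succ, tribEntry]

theorem tribConv_succ (m n : ℕ) :
    tribConv m (n + 1) = tribEntry m * THdet tribEntry (n + 1) - tribConv (m + 1) n := by
  rw [tribConv, sum_range_succ', tribConv, sub_eq_neg_add, ← sum_neg_distrib]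
  simp only [pow_zero, one_mul, zero_add, Nat.sub_zero, Nat.add_sub_add_right, pow_succ]
  congr 1
  refine sum_congr rfl fun k _ => ?_
  rw [show k + 1 + m = k + (m + 1) by ring]
  ring

theorem tribConv_four (n : ℕ) : tribConv 4 n = tribConv 3 n + tribConv 2 n + tribConv 1 n := by
  simp only [tribConv, ← sum_add_distrib]
  refine sum_congr rfl fun k _ => ?_
  rw [tribEntry_add_three (Nat.succ_ne_zero k)]
  ring

theorem THdet_tribEntry_add_four (n : ℕ) :
    THdet tribEntry (n + 4) =
      3 * THdet tribEntry (n + 3) - 2 * THdet tribEntry (n + 2) + THdet tribEntry (n + 1) := by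
  have h1 := tribConv_succ 1 (n + 2)
  have h2 := tribConv_succ 2 (n + 1)
  have h3 := tribConv_succ 3 n
  have h4 := tribConv_succ 1 (n + 1)
  have h5 := tribConv_succ 2 n
  have h6 := tribConv_succ 1 n
  have h7 := tribConv_four n
  have hvalues : tribEntry 1 = 4 ∧ tribEntry 2 = 7 ∧ tribEntry 3 = 13 := by decide
  simp only [tribConv_one, hvalues, add_assoc, Nat.reduceAdd] at *
  linarith

def chooseSum (j m : ℕ) : ℤ := ∑ k ∈ range (m + 1), ((m + k).choose (3 * k + j) : ℤ)

theorem chooseSum_eq_sum_range_add_two (j m : ℕ) :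
    chooseSum j m = ∑ k ∈ range (m + 2), ((m + k).choose (3 * k + j) : ℤ) := by
  rw [chooseSum, sum_range_succ _ (m + 1), Nat.choose_eq_zero_of_lt (by omega), Nat.cast_zero,
    add_zero]

theorem chooseSum_succ_succ (j m : ℕ) :
    chooseSum (j + 1) (m + 1) = chooseSum (j + 1) m + chooseSum j m := by
  rw [chooseSum_eq_sum_range_add_two (j + 1) m, chooseSum_eq_sum_range_add_two j m, chooseSum,
    ← sum_add_distrib]
  refine sum_congr rfl fun k _ => ?_
  rw [show m + 1 + k = m + k + 1 by ring, show 3 * k + (j + 1) = 3 * k + j + 1 by ring,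
    Nat.choose_succ_succ', Nat.cast_add]
  ring

theorem chooseSum_zero_succ (m : ℕ) :
    chooseSum 0 (m + 1) = chooseSum 0 m + chooseSum 2 (m + 1) := by
  have hlhs :
      chooseSum 0 (m + 1) = ∑ k ∈ range (m + 1), ((m + k + 2).choose (3 * k + 3) : ℤ) + 1 := by
    rw [chooseSum, sum_range_succ']
    simp only [add_zero, mul_zero, Nat.choose_zero_right, Nat.cast_one]
    congr 1
    refine sum_congr rfl fun k _ => ?_
    congr 2; ring
  have h0 : chooseSum 0 m = ∑ k ∈ range (m + 1), ((m + k + 1).choose (3 * k + 3) : ℤ) + 1 := by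
    rw [chooseSum_eq_sum_range_add_two, sum_range_succ']
    simp only [add_zero, mul_zero, Nat.choose_zero_right, Nat.cast_one]
    rfl
  have h2 : chooseSum 2 (m + 1) = ∑ k ∈ range (m + 1), ((m + k + 1).choose (3 * k + 2) : ℤ) := by
    rw [chooseSum, sum_range_succ, Nat.choose_eq_zero_of_lt (by omega), Nat.cast_zero, add_zero]
    refine sum_congr rfl fun k _ => ?_
    congr 2
    ring
  rw [hlhs, h0, h2, add_right_comm, ← sum_add_distrib]
  congr 1
  refine sum_congr rfl fun k _ => ?_
  rw [Nat.choose_succ_succ', Nat.cast_add]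
  ring

theorem chooseSum_one_add_three (m : ℕ) :
    chooseSum 1 (m + 3) = 3 * chooseSum 1 (m + 2) - 2 * chooseSum 1 (m + 1) + chooseSum 1 m := by
  have h1 := chooseSum_succ_succ 0 (m + 2)
  have h2 := chooseSum_succ_succ 0 (m + 1)
  have h3 := chooseSum_succ_succ 0 m
  have h4 := chooseSum_zero_succ (m + 1)
  have h5 := chooseSum_zero_succ m
  have h6 := chooseSum_succ_succ 1 (m + 1)
  linarith

theorem sum_choose_eq_chooseSum (n : ℕ) :
    ∑ i ∈ range ((n + 1) / 2 + 1), ((n + 2 + i).choose (n + 1 - 2 * i) : ℤ) =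
      chooseSum 1 (n + 2) := by
  rw [chooseSum]
  calc _ = ∑ i ∈ range ((n + 1) / 2 + 1), ((n + 2 + i).choose (3 * i + 1) : ℤ) := by
        refine sum_congr rfl fun i hi => ?_
        have : 2 * i ≤ n + 1 := by rw [mem_range] at hi; omega
        rw [← Nat.choose_symm (by omega)]
        congr 2
        omega
    _ = _ := by
        refine sum_subset (range_subset_range.2 (by omega)) fun k _ hk => ?_
        rw [mem_range] at hk
        rw [Nat.choose_eq_zero_of_lt (by omega), Nat.cast_zero]

theorem THdet_tribEntry_eq_chooseSum : ∀ n, THdet tribEntry (n + 1) = chooseSum 1 (n + 3)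
  | 0 | 1 | 2 => by
    norm_num [THdet_succ, THdet_zero, sum_range_succ, chooseSum, tribEntry, trib, Nat.choose]
  | n + 3 => by
    rw [THdet_tribEntry_add_four, chooseSum_one_add_three, THdet_tribEntry_eq_chooseSum n,
      THdet_tribEntry_eq_chooseSum (n + 1), THdet_tribEntry_eq_chooseSum (n + 2)]

theorem stmt_11 (n : ℕ) (hn : 1 ≤ n) :
    THdet (fun k => if k = 0 then 1 else trib (k + 4)) n =
      ∑ i ∈ Finset.range ((n + 1) / 2 + 1), ((n + 2 + i).choose (n + 1 - 2 * i) : ℤ) := by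
  obtain ⟨m, rfl⟩ : ∃ m, n = m + 1 := ⟨n - 1, by omega⟩
  rw [sum_choose_eq_chooseSum]
  exact THdet_tribEntry_eq_chooseSum m
end

section
/- Fix an integer r ≥ 3 and let {T_n^{(r)}} be the generalized r-tribonacci numbers, and let {a_n^{(r)}} be defined by a_n^{(r)} = a_{n−1}^{(r)} + a_{n−r}^{(r)} for n ≥ r with a_0^{(r)} = ⋯ = a_{r−1}^{(r)} = 1. For every integer n ≥ 2, the Toeplitz–Hessenberg determinant det(1; T_{r−2}^{(r)}, T_{r−1}^{(r)}, …, T_{n+r−3}^{(r)}) equals (−1)^{n−1} a_{n−2}^{(r)}. -/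
def THmat (b : ℕ → ℤ) (n : ℕ) : Matrix (Fin n) (Fin n) ℤ :=
  Matrix.of fun i j => if (j : ℕ) ≤ (i : ℕ) + 1 then b ((i : ℕ) + 1 - (j : ℕ)) else 0

lemma THdet_eq (b : ℕ → ℤ) (n : ℕ) : THdet b n = (THmat b n).det := rfl

lemma THmat_shift (b : ℕ → ℤ) (n : ℕ) (i j : Fin n) :
    THmat b (n+1) i.succ j.succ = THmat b n i j := by
  simp only [THmat, Matrix.of_apply, Fin.val_succ]
  have h : ((j:ℕ)+1 ≤ (i:ℕ)+1+1) ↔ ((j:ℕ) ≤ (i:ℕ)+1) := by omega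
  rw [show (i:ℕ)+1+1-((j:ℕ)+1) = (i:ℕ)+1-(j:ℕ) by omega, if_congr h rfl rfl]

lemma THminor (b : ℕ → ℤ) : ∀ n (i : Fin (n+1)),
    ((THmat b (n+1)).submatrix i.succAbove Fin.succ).det
      = b 0 ^ (i:ℕ) * THdet b (n - (i:ℕ)) := by
  intro n
  induction n with
  | zero =>
    intro i
    rw [Matrix.det_fin_zero]
    have : (i:ℕ) = 0 := by omega
    rw [this]
    simp [THdet, Matrix.det_fin_zero]
  | succ n ih =>
    intro i
    induction i using Fin.cases with
    | zero =>
      rw [Fin.succAbove_zero]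
      have h : (THmat b (n+1+1)).submatrix Fin.succ Fin.succ = THmat b (n+1) := by
        ext p q; exact THmat_shift b (n+1) p q
      rw [h]
      simp [THdet_eq]
    | succ j =>
      rw [Matrix.det_succ_row_zero]
      rw [Fintype.sum_eq_single (0 : Fin (n+1))]
      · have h0 : ((THmat b (n+2)).submatrix j.succ.succAbove Fin.succ) 0 0 = b 0 := by
          simp [Matrix.submatrix_apply, THmat]
        have h1 : ((THmat b (n+2)).submatrix j.succ.succAbove Fin.succ).submatrix
            Fin.succ ((0 : Fin (n+1)).succAbove)
            = (THmat b (n+1)).submatrix j.succAbove Fin.succ := by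
          ext p q
          simp only [Matrix.submatrix_apply, Fin.succAbove_zero, Fin.succ_succAbove_succ]
          exact THmat_shift b (n+1) (j.succAbove p) q.succ
        rw [h0, h1, ih j]
        rw [show ((j.succ : Fin (n+2)) : ℕ) = (j:ℕ)+1 from rfl]
        rw [show n + 1 - ((j:ℕ)+1) = n - (j:ℕ) by omega]
        simp [pow_succ]; ring
      · intro q hq
        have hv : 1 ≤ (q:ℕ) := Nat.one_le_iff_ne_zero.mpr (fun h => hq (Fin.ext h))
        have hz : ((THmat b (n+1+1)).submatrix j.succ.succAbove Fin.succ) 0 q = 0 := by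
          simp only [Matrix.submatrix_apply, Fin.succ_succAbove_zero, THmat, Matrix.of_apply]
          rw [if_neg]
          simp only [Fin.val_succ, Fin.val_zero]
          omega
        rw [hz]; ring

lemma THdet_expand (b : ℕ → ℤ) (n : ℕ) :
    THdet b (n+1) = ∑ i ∈ Finset.range (n+1),
      (-1)^i * b (i+1) * (b 0 ^ i * THdet b (n - i)) := by
  rw [THdet_eq, Matrix.det_succ_column_zero, ← Fin.sum_univ_eq_sum_range]
  refine Finset.sum_congr rfl fun i _ => ?_
  rw [THminor]
  have h : (THmat b (n+1)) i 0 = b ((i:ℕ)+1) := by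
    simp [THmat]
  rw [h]

theorem stmt_14 (r : ℕ) (hr : 3 ≤ r) (T : ℕ → ℤ)
    (hT0 : ∀ k, k < r - 1 → T k = 0) (hT1 : T (r - 1) = 1)
    (hTrec : ∀ n, r ≤ n → T n = T (n - 1) + T (n - 2) + T (n - r))
    (a : ℕ → ℤ) (ha0 : ∀ k, k < r → a k = 1)
    (harec : ∀ n, r ≤ n → a n = a (n - 1) + a (n - r))
    (n : ℕ) (hn : 2 ≤ n) :
    THdet (fun k => if k = 0 then 1 else T (k + r - 3)) n =
      (-1) ^ (n - 1) * a (n - 2) := by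
  obtain ⟨s, rfl⟩ : ∃ s, r = s + 3 := ⟨r - 3, by omega⟩
  have hT0' : ∀ k, k < s + 2 → T k = 0 := fun k hk => hT0 k (by omega)
  have hT1' : T (s + 2) = 1 := by rw [show s + 2 = s + 3 - 1 by omega]; exact hT1
  set b : ℕ → ℤ := fun k => if k = 0 then 1 else T (k + (s + 3) - 3) with hbdef
  have hb : ∀ i, 1 ≤ i → b i = T (i + s) := by
    intro i hi
    simp only [hbdef]
    rw [if_neg (by omega), show i + (s + 3) - 3 = i + s by omega]
  -- key convolution identity
  have key : ∀ n, T (n + s + 2) =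
      a n + ∑ j ∈ Finset.range n, a j * T (n - 1 - j + s + 1) := by
    intro n
    induction n using Nat.strong_induction_on with
    | _ n ih =>
    match n, ih with
    | 0, _ => rw [show 0 + s + 2 = s + 2 by omega, hT1', ha0 0 (by omega)]; simp
    | 1, _ =>
      have h1 : T (s + 3) = T (s + 2) + T (s + 1) + T 0 := by
        have := hTrec (s + 3) le_rfl
        rw [this]
        rw [show s + 3 - 1 = s + 2 by omega, show s + 3 - 2 = s + 1 by omega,
            show s + 3 - (s + 3) = 0 by omega]
      rw [show 1 + s + 2 = s + 3 by omega, h1, hT1', hT0' (s + 1) (by omega),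
          hT0' 0 (by omega), ha0 1 (by omega)]
      simp [hT0' (s + 1) (by omega)]
    | (m + 2), ih =>
      -- LHS via T-recurrence
      have hL : T (m + 2 + s + 2) = T (m + s + 3) + T (m + s + 2) + T (m + 1) := by
        rw [hTrec (m + 2 + s + 2) (by omega)]
        rw [show m + 2 + s + 2 - 1 = m + s + 3 by omega,
            show m + 2 + s + 2 - 2 = m + s + 2 by omega,
            show m + 2 + s + 2 - (s + 3) = m + 1 by omega]
      -- split off the last two terms of the RHS sum
      have hsplit : ∑ j ∈ Finset.range (m + 2), a j * T (m + 2 - 1 - j + s + 1)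
          = (∑ j ∈ Finset.range m, a j * T (m + 1 - j + s + 1)) + a m := by
        rw [Finset.sum_range_succ, Finset.sum_range_succ]
        rw [show m + 2 - 1 - m + s + 1 = s + 2 by omega,
            show m + 2 - 1 - (m + 1) + s + 1 = s + 1 by omega,
            hT1', hT0' (s + 1) (by omega)]
        have : ∀ j ∈ Finset.range m, a j * T (m + 2 - 1 - j + s + 1)
            = a j * T (m + 1 - j + s + 1) := by
          intro j hj
          have hj' := Finset.mem_range.mp hj
          rw [show m + 2 - 1 - j + s + 1 = m + 1 - j + s + 1 by omega]
        rw [Finset.sum_congr rfl this]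
        ring
      -- expand each term of the remaining sum by the T-recurrence
      have hexp : ∑ j ∈ Finset.range m, a j * T (m + 1 - j + s + 1)
          = (∑ j ∈ Finset.range m, a j * T (m - j + s + 1))
          + (∑ j ∈ Finset.range m, a j * T (m - 1 - j + s + 1))
          + (∑ j ∈ Finset.range m, a j * T (m - 1 - j)) := by
        rw [← Finset.sum_add_distrib, ← Finset.sum_add_distrib]
        refine Finset.sum_congr rfl fun j hj => ?_
        have hj' : j < m := Finset.mem_range.mp hj
        rw [hTrec (m + 1 - j + s + 1) (by omega),
            show m + 1 - j + s + 1 - 1 = m - j + s + 1 by omega,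
            show m + 1 - j + s + 1 - 2 = m - 1 - j + s + 1 by omega,
            show m + 1 - j + s + 1 - (s + 3) = m - 1 - j by omega]
        ring
      -- identify the first sum with IH(m+1)
      have hA : ∑ j ∈ Finset.range m, a j * T (m - j + s + 1)
          = T (m + 1 + s + 2) - a (m + 1) := by
        have h1 := ih (m + 1) (by omega)
        have h2 : ∑ j ∈ Finset.range (m + 1), a j * T (m + 1 - 1 - j + s + 1)
            = (∑ j ∈ Finset.range m, a j * T (m - j + s + 1)) := by
          rw [Finset.sum_range_succ,
              show m + 1 - 1 - m + s + 1 = s + 1 by omega, hT0' (s + 1) (by omega)]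
          rw [Finset.sum_congr rfl (fun j hj => by
            have hj' := Finset.mem_range.mp hj
            rw [show m + 1 - 1 - j + s + 1 = m - j + s + 1 by omega]
            : ∀ j ∈ Finset.range m, a j * T (m + 1 - 1 - j + s + 1)
              = a j * T (m - j + s + 1))]
          ring
        rw [h2] at h1
        linarith
      -- identify the second sum with IH(m)
      have hB : ∑ j ∈ Finset.range m, a j * T (m - 1 - j + s + 1)
          = T (m + s + 2) - a m := by
        have h1 := ih m (by omega)
        linarith
      -- the third sum
      have hC : a (m + 2) + (∑ j ∈ Finset.range m, a j * T (m - 1 - j))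
          = a (m + 1) + T (m + 1) := by
        by_cases hm : s + 1 ≤ m
        · have hrec := harec (m + 2) (by omega)
          rw [show m + 2 - 1 = m + 1 by omega,
              show m + 2 - (s + 3) = m - s - 1 by omega] at hrec
          have hkey := ih (m - s - 1) (by omega)
          rw [show m - s - 1 + s + 2 = m + 1 by omega] at hkey
          have hsub : ∑ j ∈ Finset.range m, a j * T (m - 1 - j)
              = ∑ j ∈ Finset.range (m - s - 1), a j * T (m - 1 - j) := by
            symm
            apply Finset.sum_subset (Finset.range_subset_range.mpr (by omega))
            intro x hx hnx
            have h1 := Finset.mem_range.mp hx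
            have h2 : ¬ x < m - s - 1 := fun h => hnx (Finset.mem_range.mpr h)
            rw [hT0' (m - 1 - x) (by omega)]
            ring
          have hsub2 : ∑ j ∈ Finset.range (m - s - 1), a j * T (m - 1 - j)
              = ∑ j ∈ Finset.range (m - s - 1), a j * T (m - s - 1 - 1 - j + s + 1) :=
            Finset.sum_congr rfl (fun j hj => by
              have hj' := Finset.mem_range.mp hj
              rw [show m - s - 1 - 1 - j + s + 1 = m - 1 - j by omega])
          rw [hsub, hsub2]
          linarith
        · have h1 : a (m + 2) = 1 := ha0 _ (by omega)
          have h2 : a (m + 1) = 1 := ha0 _ (by omega)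
          have h3 : T (m + 1) = 0 := hT0' _ (by omega)
          have h4 : ∑ j ∈ Finset.range m, a j * T (m - 1 - j) = 0 :=
            Finset.sum_eq_zero (fun j hj => by
              rw [hT0' (m - 1 - j) (by omega)]; ring)
          rw [h1, h2, h3, h4]
      rw [show m + 1 + s + 2 = m + s + 3 by omega] at hA
      rw [hL, hsplit, hexp, hA, hB]
      linarith
  -- determinant base cases
  have hD0 : THdet b 0 = 1 := by
    rw [THdet_eq]; exact Matrix.det_fin_zero
  have hD1 : THdet b 1 = 0 := by
    rw [THdet_eq, Matrix.det_fin_one]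
    simp only [THmat, Matrix.of_apply, Fin.val_zero]
    norm_num
    rw [hb 1 le_rfl]
    exact hT0' (1 + s) (by omega)
  have hb0 : b 0 = 1 := rfl
  -- main induction
  have hQ : ∀ m, THdet b (m + 2) = (-1) ^ (m + 1) * a m := by
    intro m
    induction m using Nat.strong_induction_on with
    | _ m ih =>
    rw [show m + 2 = (m + 1) + 1 from rfl, THdet_expand]
    rw [Finset.sum_range_succ, Finset.sum_range_succ]
    have hmid : ∑ i ∈ Finset.range m, (-1:ℤ) ^ i * b (i + 1) * (b 0 ^ i * THdet b (m + 1 - i))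
        = (-1) ^ m * (∑ j ∈ Finset.range m, a j * T (m - 1 - j + s + 1)) := by
      rw [Finset.mul_sum,
          ← Finset.sum_range_reflect (fun j => (-1:ℤ) ^ m * (a j * T (m - 1 - j + s + 1))) m]
      refine Finset.sum_congr rfl fun i hi => ?_
      have hi' := Finset.mem_range.mp hi
      rw [hb (i + 1) (by omega), hb0, one_pow, one_mul]
      rw [show m + 1 - i = (m - 1 - i) + 2 by omega, ih (m - 1 - i) (by omega)]
      rw [show m - 1 - (m - 1 - i) + s + 1 = i + 1 + s by omega]
      rw [show m - 1 - i + 1 = m - i by omega]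
      have hs : ((-1:ℤ)) ^ i * (-1) ^ (m - i) = (-1) ^ m := by
        rw [← pow_add, show i + (m - i) = m by omega]
      linear_combination (T (i + 1 + s) * a (m - 1 - i)) * hs
    rw [hmid]
    rw [show m + 1 - m = 1 by omega, hD1]
    rw [show m + 1 - (m + 1) = 0 by omega, hD0]
    rw [hb (m + 1 + 1) (by omega), show m + 1 + 1 + s = m + s + 2 by omega, hb0, one_pow]
    have hk := key m
    have hsum : (∑ j ∈ Finset.range m, a j * T (m - 1 - j + s + 1))
        = T (m + s + 2) - a m := by linarith
    rw [hsum, pow_succ]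
    ring
  obtain ⟨m, rfl⟩ : ∃ m, n = m + 2 := ⟨n - 2, by omega⟩
  rw [show m + 2 - 1 = m + 1 by omega, show m + 2 - 2 = m by omega]
  exact hQ m
end
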